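/- arXiv:1510.06051 — 15 statements merged into one kernel-verified Lean document; each statement's English description precedes it below -/
import Mathlib

section
/- Let π be a permutation of size k, τ a permutation of size n, and f : Fin k → Fin n any map. Then f is an embedding of π into τ if and only if for every position x of π: (i) if x > 0 then f(x−1) < f(x) (as positions), and (ii) if π x > 0 then τ(f(π⁻¹(π x − 1))) < τ(f(x)) (as values). -/
/-- `f` is an embedding of the permutation `π` (of size `k`) into the permutation `τ`
(of size `n`): a strictly increasing map on positions that preserves the relative
order of values. -/
def IsEmbedding {k n : ℕ} (π : Equiv.Perm (Fin k)) (τ : Equiv.Perm (Fin n))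
    (f : Fin k → Fin n) : Prop :=
  StrictMono f ∧ ∀ i j : Fin k, π i < π j ↔ τ (f i) < τ (f j)

/-- The permutation `τ` avoids the pattern `321`. -/
def Avoids321 {n : ℕ} (τ : Equiv.Perm (Fin n)) : Prop :=
  ¬ ∃ i j k : Fin n, i < j ∧ j < k ∧ τ k < τ j ∧ τ j < τ i

/-- Position `i` is an upper element of `τ`: it participates as the `2` in a copy of `21`. -/
def UpperElt {n : ℕ} (τ : Equiv.Perm (Fin n)) (i : Fin n) : Prop :=
  ∃ j : Fin n, i < j ∧ τ j < τ i

/-- Position `i` is a lower element of `τ`: it participates as the `1` in a copy of `21`. -/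
def LowerElt {n : ℕ} (τ : Equiv.Perm (Fin n)) (i : Fin n) : Prop :=
  ∃ j : Fin n, j < i ∧ τ i < τ j

/-- Position `i` is a fluid element of `τ`: neither upper nor lower. -/
def FluidElt {n : ℕ} (τ : Equiv.Perm (Fin n)) (i : Fin n) : Prop :=
  ¬ UpperElt τ i ∧ ¬ LowerElt τ i

/-- A permutation is rigid if every position is an upper or a lower element. -/
def Rigid {n : ℕ} (τ : Equiv.Perm (Fin n)) : Prop :=
  ∀ i : Fin n, UpperElt τ i ∨ LowerElt τ i

/-- `f : π → τ` is a rigid mapping: it sends upper elements to upper elements and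
lower elements to lower elements. -/
def RigidMapping {k n : ℕ} (π : Equiv.Perm (Fin k)) (τ : Equiv.Perm (Fin n))
    (f : Fin k → Fin n) : Prop :=
  (∀ x : Fin k, UpperElt π x → UpperElt τ (f x)) ∧
  (∀ x : Fin k, LowerElt π x → LowerElt τ (f x))

/-- `q` is the leftmost position strictly to the right of `p` satisfying `P`
(this is `p^→_T` when `P` is "being a type-`T` element"). -/
def IsNextRight {n : ℕ} (P : Fin n → Prop) (p q : Fin n) : Prop :=
  P q ∧ p < q ∧ ∀ r : Fin n, P r → p < r → q ≤ r

/-- `q` is the position with least value among positions satisfying `P` whose value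
exceeds that of `p` (this is `p^↑_T` when `P` is "being a type-`T` element"). -/
def IsNextAbove {n : ℕ} (τ : Equiv.Perm (Fin n)) (P : Fin n → Prop) (p q : Fin n) : Prop :=
  P q ∧ τ p < τ q ∧ ∀ r : Fin n, P r → τ p < τ r → τ q ≤ τ r

private lemma adj_strictMono {k : ℕ} {α : Type*} [Preorder α] (g : Fin k → α)
    (h : ∀ x y : Fin k, (y : ℕ) + 1 = (x : ℕ) → g y < g x) : StrictMono g := by
  have key : ∀ d : ℕ, ∀ i j : Fin k, (j : ℕ) = (i : ℕ) + d + 1 → g i < g j := by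
    intro d
    induction d with
    | zero => intro i j hj; exact h j i (by omega)
    | succ d ih =>
      intro i j hj
      have hj1 : (j : ℕ) - 1 < k := lt_of_le_of_lt (Nat.sub_le _ _) j.isLt
      exact (ih i ⟨(j : ℕ) - 1, hj1⟩ (by simp; omega)).trans (h j ⟨(j : ℕ) - 1, hj1⟩ (by simp; omega))
  intro i j hij
  exact key ((j : ℕ) - (i : ℕ) - 1) i j (by have := hij; omega)

/-- `f` is an embedding of `π` into `τ` iff for every position `x` of `π`,
(i) if `x > 0` then `f(x−1) < f(x)` (the position `x−1` being the `y` with `y+1 = x`), and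
(ii) if `π x > 0` then `τ (f (π⁻¹(π x − 1))) < τ (f x)` (the position `π⁻¹(π x − 1)` being
the `y` with `π y + 1 = π x`). -/
theorem statement0 {k n : ℕ} (π : Equiv.Perm (Fin k)) (τ : Equiv.Perm (Fin n))
    (f : Fin k → Fin n) :
    IsEmbedding π τ f ↔
      ∀ x : Fin k,
        (∀ y : Fin k, (y : ℕ) + 1 = (x : ℕ) → f y < f x) ∧
        (∀ y : Fin k, ((π y : ℕ)) + 1 = ((π x : ℕ)) → τ (f y) < τ (f x)) := by
  constructor
  · rintro ⟨hm, ho⟩ x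
    refine ⟨fun y hy => hm (by omega : y < x), fun y hy => (ho y x).1 (by omega)⟩
  · intro h
    have hm : StrictMono f := adj_strictMono f (fun x y hyx => (h x).1 y hyx)
    have hF : StrictMono (fun v : Fin k => τ (f (π.symm v))) := by
      refine adj_strictMono _ (fun v w hwv => ?_)
      exact (h (π.symm v)).2 (π.symm w) (by simp [hwv])
    refine ⟨hm, fun i j => ?_⟩
    have := hF.lt_iff_lt (a := π i) (b := π j)
    simpa using this.symm
end

section
/- Let π be a rigid 321-avoiding permutation of size k, τ a 321-avoiding permutation of size n, and e an embedding of π into τ. Then e maps every upper element of π to an upper element of τ and every lower element of π to a lower element of τ; in particular, no fluid element of τ lies in the image of e. -/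
/-- an embedding of a rigid 321-avoiding `π` into a 321-avoiding `τ` maps
upper elements to upper elements and lower elements to lower elements; in particular
no fluid element of `τ` lies in its image. -/
theorem statement1 {k n : ℕ} (π : Equiv.Perm (Fin k)) (τ : Equiv.Perm (Fin n))
    (hπ : Avoids321 π) (hπr : Rigid π) (hτ : Avoids321 τ)
    (e : Fin k → Fin n) (he : IsEmbedding π τ e) :
    (∀ x : Fin k, UpperElt π x → UpperElt τ (e x)) ∧
    (∀ x : Fin k, LowerElt π x → LowerElt τ (e x)) ∧
    (∀ y : Fin n, FluidElt τ y → y ∉ Set.range e) := by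
  obtain ⟨hmono, hord⟩ := he
  have hU : ∀ x : Fin k, UpperElt π x → UpperElt τ (e x) := by
    rintro x ⟨j, hxj, hval⟩
    exact ⟨e j, hmono hxj, (hord j x).mp hval⟩
  have hL : ∀ x : Fin k, LowerElt π x → LowerElt τ (e x) := by
    rintro x ⟨j, hjx, hval⟩
    exact ⟨e j, hmono hjx, (hord x j).mp hval⟩
  refine ⟨hU, hL, ?_⟩
  rintro y ⟨hnu, hnl⟩ ⟨x, rfl⟩
  rcases hπr x with h | h
  · exact hnu (hU x h)
  · exact hnl (hL x h)
end

section
/- Let π be a rigid 321-avoiding permutation of size k, τ a 321-avoiding permutation of size n, and let e₁ and e₂ be embeddings of π into τ. Then the map x ↦ min(e₁ x, e₂ x) (pointwise minimum of positions) and the map x ↦ max(e₁ x, e₂ x) (pointwise maximum of positions) are both embeddings of π into τ. -/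
/-- the pointwise minimum and the pointwise maximum of two embeddings of a
rigid 321-avoiding pattern into a 321-avoiding text are again embeddings. -/
theorem statement5 {k n : ℕ} (π : Equiv.Perm (Fin k)) (τ : Equiv.Perm (Fin n))
    (hπ : Avoids321 π) (hπr : Rigid π) (hτ : Avoids321 τ)
    (e₁ e₂ : Fin k → Fin n)
    (he₁ : IsEmbedding π τ e₁) (he₂ : IsEmbedding π τ e₂) :
    IsEmbedding π τ (fun x => min (e₁ x) (e₂ x)) ∧
    IsEmbedding π τ (fun x => max (e₁ x) (e₂ x)) := by
  obtain ⟨hm₁, ho₁⟩ := he₁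
  obtain ⟨hm₂, ho₂⟩ := he₂
  -- Key: e₁ x and e₂ x never form an inversion in τ
  have key : ∀ (f g : Fin k → Fin n), StrictMono f → StrictMono g →
      (∀ i j, π i < π j ↔ τ (f i) < τ (f j)) →
      (∀ i j, π i < π j ↔ τ (g i) < τ (g j)) →
      ∀ x : Fin k, f x < g x → τ (f x) < τ (g x) := by
    intro f g hmf hmg hof hog x hlt
    by_contra h
    push_neg at h
    have hne : τ (g x) ≠ τ (f x) := fun he => (ne_of_lt hlt) (τ.injective he).symm
    have hinv : τ (g x) < τ (f x) := lt_of_le_of_ne h hne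
    rcases hπr x with ⟨y, hxy, hval⟩ | ⟨y, hyx, hval⟩
    · exact hτ ⟨f x, g x, g y, hlt, hmg hxy, (hog y x).mp hval, hinv⟩
    · exact hτ ⟨f y, f x, g x, hmf hyx, hlt, hinv, (hof x y).mp hval⟩
  have hmin : ∀ x : Fin k, τ (min (e₁ x) (e₂ x)) = min (τ (e₁ x)) (τ (e₂ x)) := by
    intro x
    rcases lt_trichotomy (e₁ x) (e₂ x) with h | h | h
    · rw [min_eq_left h.le, min_eq_left (key e₁ e₂ hm₁ hm₂ ho₁ ho₂ x h).le]
    · rw [h, min_self, min_self]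
    · rw [min_eq_right h.le, min_eq_right (key e₂ e₁ hm₂ hm₁ ho₂ ho₁ x h).le]
  have hmax : ∀ x : Fin k, τ (max (e₁ x) (e₂ x)) = max (τ (e₁ x)) (τ (e₂ x)) := by
    intro x
    rcases lt_trichotomy (e₁ x) (e₂ x) with h | h | h
    · rw [max_eq_right h.le, max_eq_right (key e₁ e₂ hm₁ hm₂ ho₁ ho₂ x h).le]
    · rw [h, max_self, max_self]
    · rw [max_eq_left h.le, max_eq_left (key e₂ e₁ hm₂ hm₁ ho₂ ho₁ x h).le]
  constructor
  · refine ⟨fun a b hab => ?_, fun i j => ?_⟩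
    · exact lt_min_iff.mpr ⟨(min_le_left _ _).trans_lt (hm₁ hab),
        (min_le_right _ _).trans_lt (hm₂ hab)⟩
    · simp only [hmin]
      constructor
      · intro h
        exact lt_min_iff.mpr ⟨(min_le_left _ _).trans_lt ((ho₁ i j).mp h),
          (min_le_right _ _).trans_lt ((ho₂ i j).mp h)⟩
      · intro h
        rcases min_cases (τ (e₁ i)) (τ (e₂ i)) with ⟨hc, _⟩ | ⟨hc, _⟩
        · exact (ho₁ i j).mpr ((hc ▸ h).trans_le (min_le_left _ _))
        · exact (ho₂ i j).mpr ((hc ▸ h).trans_le (min_le_right _ _))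
  · refine ⟨fun a b hab => ?_, fun i j => ?_⟩
    · exact max_lt_iff.mpr ⟨(hm₁ hab).trans_le (le_max_left _ _),
        (hm₂ hab).trans_le (le_max_right _ _)⟩
    · simp only [hmax]
      constructor
      · intro h
        exact max_lt_iff.mpr ⟨((ho₁ i j).mp h).trans_le (le_max_left _ _),
          ((ho₂ i j).mp h).trans_le (le_max_right _ _)⟩
      · intro h
        rcases max_cases (τ (e₁ j)) (τ (e₂ j)) with ⟨hc, _⟩ | ⟨hc, _⟩
        · exact (ho₁ i j).mpr ((le_max_left (τ (e₁ i)) (τ (e₂ i))).trans_lt (hc ▸ h))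
        · exact (ho₂ i j).mpr ((le_max_right (τ (e₁ i)) (τ (e₂ i))).trans_lt (hc ▸ h))
end

section
/- Let π be a rigid 321-avoiding permutation of size k and τ a 321-avoiding permutation of size n. If there exists an embedding of π into τ, then there exists a minimum embedding e_min of π into τ, i.e., an embedding such that for every embedding e of π into τ and every position x of π, e_min(x) ≤ e(x) as positions. -/
variable {k n : ℕ} {π : Equiv.Perm (Fin k)} {τ : Equiv.Perm (Fin n)}

lemma isEmbedding_of_lt_imp_lt {g : Fin k → Fin n} (hg : StrictMono g)
    (hval : ∀ i j, π i < π j → τ (g i) < τ (g j)) : IsEmbedding π τ g := by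
  have hmono : StrictMono (τ ∘ g ∘ π.symm) := fun u v huv => by
    simpa using hval (π.symm u) (π.symm v) (by simpa using huv)
  refine ⟨hg, fun i j => ?_⟩
  simpa using hmono.lt_iff_lt (a := π i) (b := π j) |>.symm

namespace IsEmbedding

lemma lt_of_crossing (hπ : Rigid π) (hτ : Avoids321 τ) {e f : Fin k → Fin n}
    (he : IsEmbedding π τ e) (hf : IsEmbedding π τ f) {x y : Fin k}
    (hxy : π x < π y) (hx : e x ≤ f x) (hy : f y ≤ e y) : τ (e x) < τ (f y) := by
  by_contra! hyx
  have hfx : τ (f x) < τ (e x) := ((hf.2 x y).mp hxy).trans_le hyx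
  have hx' : e x < f x := hx.lt_of_ne fun h => (h ▸ hfx).false
  rcases lt_or_gt_of_ne (show x ≠ y by rintro rfl; exact hxy.false) with hlt | hgt
  · have hexfy : e x < f y := hx.trans_lt (hf.1 hlt)
    have hyx' : τ (f y) < τ (e x) := hyx.lt_of_ne (τ.injective.ne hexfy.ne')
    rcases hπ x with ⟨u, hxu, hu⟩ | ⟨l, hlx, hl⟩
    · exact hτ ⟨e x, f x, f u, hx', hf.1 hxu, (hf.2 u x).mp hu, hfx⟩
    · exact hτ ⟨e l, e x, f y, he.1 hlx, hexfy, hyx', (he.2 x l).mp hl⟩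
  · exact hτ ⟨e y, e x, f x, he.1 hgt, hx', hfx, (he.2 x y).mp hxy⟩

lemma inf (hπ : Rigid π) (hτ : Avoids321 τ) {e f : Fin k → Fin n}
    (he : IsEmbedding π τ e) (hf : IsEmbedding π τ f) : IsEmbedding π τ (e ⊓ f) := by
  refine isEmbedding_of_lt_imp_lt
    (fun i j hij => lt_inf_iff.mpr ⟨inf_le_left.trans_lt (he.1 hij),
      inf_le_right.trans_lt (hf.1 hij)⟩) fun i j hij => ?_
  simp only [Pi.inf_apply]
  rcases le_total (e i) (f i) with hi | hi <;> rcases le_total (f j) (e j) with hj | hj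
  · rw [inf_eq_left.mpr hi, inf_eq_right.mpr hj]
    exact he.lt_of_crossing hπ hτ hf hij hi hj
  · rw [inf_eq_left.mpr hi, inf_eq_left.mpr hj]
    exact (he.2 i j).mp hij
  · rw [inf_eq_right.mpr hi, inf_eq_right.mpr hj]
    exact (hf.2 i j).mp hij
  · rw [inf_eq_right.mpr hi, inf_eq_left.mpr hj]
    exact hf.lt_of_crossing hπ hτ he hij hi hj

end IsEmbedding

theorem statement6_general {k n : ℕ} (π : Equiv.Perm (Fin k)) (τ : Equiv.Perm (Fin n))
    (hπr : Rigid π) (hτ : Avoids321 τ)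
    (h : ∃ e : Fin k → Fin n, IsEmbedding π τ e) :
    ∃ emin : Fin k → Fin n, IsEmbedding π τ emin ∧
      ∀ e : Fin k → Fin n, IsEmbedding π τ e → ∀ x : Fin k, emin x ≤ e x := by
  classical
  set S := (Finset.univ : Finset (Fin k → Fin n)).filter (IsEmbedding π τ)
  have hS : S.Nonempty := by simpa [S, Finset.filter_nonempty_iff] using h
  refine ⟨S.inf' hS id, ?_, fun e he => Finset.inf'_le id (b := e) (by simpa [S] using he)⟩
  exact Finset.inf'_induction hS id (fun _ h₁ _ h₂ => h₁.inf hπr hτ h₂) (by simp [S])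

/-- if a rigid 321-avoiding pattern `π` embeds into a 321-avoiding text `τ`,
then there is a minimum embedding of `π` into `τ`. -/
theorem statement6 {k n : ℕ} (π : Equiv.Perm (Fin k)) (τ : Equiv.Perm (Fin n))
    (hπ : Avoids321 π) (hπr : Rigid π) (hτ : Avoids321 τ)
    (h : ∃ e : Fin k → Fin n, IsEmbedding π τ e) :
    ∃ emin : Fin k → Fin n, IsEmbedding π τ emin ∧
      ∀ e : Fin k → Fin n, IsEmbedding π τ e → ∀ x : Fin k, emin x ≤ e x :=
  statement6_general π τ hπr hτ h
end

section
/- Let π be a rigid 321-avoiding permutation of size k, τ a 321-avoiding permutation of size n, e an embedding of π into τ, and f a rigid mapping from π to τ such that f(x) ≤ e(x) (as positions) for every position x of π. Then for every position x of π: (i) if x^← is defined, then (f(x^←))^→_{T(x)} is defined and (f(x^←))^→_{T(x)} ≤ e(x) as positions; and (ii) if x^↓ is defined, then (f(x^↓))^↑_{T(x)} is defined and (f(x^↓))^↑_{T(x)} ≤ e(x) as positions. -/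
lemma not_upper_and_lower {n : ℕ} {τ : Equiv.Perm (Fin n)} (hτ : Avoids321 τ)
    {i : Fin n} (hu : UpperElt τ i) (hl : LowerElt τ i) : False := by
  obtain ⟨j, hij, hji⟩ := hu
  obtain ⟨m, hmi, him⟩ := hl
  exact hτ ⟨m, i, j, hmi, hij, hji, him⟩

lemma upper_mono {n : ℕ} {τ : Equiv.Perm (Fin n)} (hτ : Avoids321 τ)
    {i j : Fin n} (hi : UpperElt τ i) (hj : UpperElt τ j) (h : i < j) : τ i < τ j := by
  by_contra h'
  push_neg at h'
  have hne : τ j ≠ τ i := fun hh => h.ne (τ.injective hh).symm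
  obtain ⟨m, hm, hmv⟩ := hj
  exact hτ ⟨i, j, m, h, hm, hmv, lt_of_le_of_ne h' hne⟩

lemma lower_mono {n : ℕ} {τ : Equiv.Perm (Fin n)} (hτ : Avoids321 τ)
    {i j : Fin n} (hi : LowerElt τ i) (hj : LowerElt τ j) (h : i < j) : τ i < τ j := by
  by_contra h'
  push_neg at h'
  have hne : τ j ≠ τ i := fun hh => h.ne (τ.injective hh).symm
  obtain ⟨m, hm, hmv⟩ := hi
  exact hτ ⟨m, i, j, hm, h, lt_of_le_of_ne h' hne, hmv⟩

lemma embed_upper {k n : ℕ} {π : Equiv.Perm (Fin k)} {τ : Equiv.Perm (Fin n)}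
    {e : Fin k → Fin n} (he : IsEmbedding π τ e) {x : Fin k} (hx : UpperElt π x) :
    UpperElt τ (e x) := by
  obtain ⟨j, hj, hv⟩ := hx
  exact ⟨e j, he.1 hj, (he.2 j x).mp hv⟩

lemma embed_lower {k n : ℕ} {π : Equiv.Perm (Fin k)} {τ : Equiv.Perm (Fin n)}
    {e : Fin k → Fin n} (he : IsEmbedding π τ e) {x : Fin k} (hx : LowerElt π x) :
    LowerElt τ (e x) := by
  obtain ⟨j, hj, hv⟩ := hx
  exact ⟨e j, he.1 hj, (he.2 x j).mp hv⟩

lemma exists_next_right {n : ℕ} (P : Fin n → Prop) {p ex : Fin n}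
    (hPex : P ex) (hlt : p < ex) : ∃ q, IsNextRight P p q ∧ q ≤ ex := by
  classical
  set S := Finset.univ.filter (fun r => P r ∧ p < r) with hS
  have hex : ex ∈ S := by simp [hS, hPex, hlt]
  have hne : S.Nonempty := ⟨_, hex⟩
  have hmem := S.min'_mem hne
  simp only [hS, Finset.mem_filter, Finset.mem_univ, true_and] at hmem
  refine ⟨S.min' hne, ⟨hmem.1, hmem.2, ?_⟩, S.min'_le _ hex⟩
  intro r hr hlt'
  exact S.min'_le r (by simp [hS, hr, hlt'])

lemma exists_next_above {n : ℕ} (τ : Equiv.Perm (Fin n)) (P : Fin n → Prop)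
    (hPmono : ∀ i j : Fin n, P i → P j → i < j → τ i < τ j)
    {p ex : Fin n} (hPex : P ex) (hlt : τ p < τ ex) :
    ∃ q, IsNextAbove τ P p q ∧ q ≤ ex := by
  classical
  set S := Finset.univ.filter (fun r => P r ∧ τ p < τ r) with hS
  have hex : ex ∈ S := by simp [hS, hPex, hlt]
  obtain ⟨q, hqS, hqmin⟩ := S.exists_min_image (fun r => τ r) ⟨_, hex⟩
  have hτq : τ q ≤ τ ex := hqmin _ hex
  simp only [hS, Finset.mem_filter, Finset.mem_univ, true_and] at hqS
  refine ⟨q, ⟨hqS.1, hqS.2, fun r hr hlt' => hqmin r (by simp [hS, hr, hlt'])⟩, ?_⟩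
  by_contra h
  push_neg at h
  exact absurd (hPmono ex q hPex hqS.1 h) (not_lt.mpr hτq)

/-- Proposition `prop-allowed-update`: if `e` is an embedding of the rigid
321-avoiding `π` into the 321-avoiding `τ`, `f` is a rigid mapping with `f ≤ e`
pointwise, then for every position `x` of `π`: (i) for the left neighbour `y = x^←`
(the position with `y + 1 = x`), the element `(f y)^→_{T(x)}` exists and is `≤ e x`;
(ii) for the lower neighbour `y = x^↓` (the position with `π y + 1 = π x`), the element
`(f y)^↑_{T(x)}` exists and is `≤ e x`.  Here `T(x)` is the type (upper or lower) of `x`. -/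
theorem statement7 {k n : ℕ} (π : Equiv.Perm (Fin k)) (τ : Equiv.Perm (Fin n))
    (hπ : Avoids321 π) (hπr : Rigid π) (hτ : Avoids321 τ)
    (e : Fin k → Fin n) (he : IsEmbedding π τ e)
    (f : Fin k → Fin n) (hf : RigidMapping π τ f)
    (hfe : ∀ x : Fin k, f x ≤ e x) :
    ∀ x : Fin k,
      (∀ y : Fin k, (y : ℕ) + 1 = (x : ℕ) →
        (UpperElt π x → ∃ q : Fin n, IsNextRight (UpperElt τ) (f y) q ∧ q ≤ e x) ∧
        (LowerElt π x → ∃ q : Fin n, IsNextRight (LowerElt τ) (f y) q ∧ q ≤ e x)) ∧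
      (∀ y : Fin k, ((π y : ℕ)) + 1 = ((π x : ℕ)) →
        (UpperElt π x → ∃ q : Fin n, IsNextAbove τ (UpperElt τ) (f y) q ∧ q ≤ e x) ∧
        (LowerElt π x → ∃ q : Fin n, IsNextAbove τ (LowerElt τ) (f y) q ∧ q ≤ e x)) := by
  intro x
  constructor
  · intro y hyx
    have hylt : y < x := by
      rw [Fin.lt_def]; omega
    have hfy : f y < e x := lt_of_le_of_lt (hfe y) (he.1 hylt)
    exact ⟨fun hxu => exists_next_right _ (embed_upper he hxu) hfy,
           fun hxl => exists_next_right _ (embed_lower he hxl) hfy⟩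
  · intro y hyx
    have hylt : π y < π x := by
      rw [Fin.lt_def]; omega
    have h1 : τ (e y) < τ (e x) := (he.2 y x).mp hylt
    have hkey : τ (f y) < τ (e x) := by
      rcases eq_or_lt_of_le (hfe y) with heq | hlt
      · rw [heq]; exact h1
      · by_contra h
        push_neg at h
        have h2 : τ (e y) < τ (f y) := lt_of_lt_of_le h1 h
        rcases hπr y with hu | hl
        · exact not_upper_and_lower hτ (embed_upper he hu) ⟨f y, hlt, h2⟩
        · exact not_upper_and_lower hτ ⟨e y, hlt, h2⟩ (hf.2 y hl)
    exact ⟨fun hxu => exists_next_above τ _ (fun i j hi hj => upper_mono hτ hi hj)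
             (embed_upper he hxu) hkey,
           fun hxl => exists_next_above τ _ (fun i j hi hj => lower_mono hτ hi hj)
             (embed_lower he hxl) hkey⟩
end

section
/- A permutation τ of size n is skew-merged if and only if τ avoids both 3412 and 2143, i.e., if and only if there are no positions i < j < k < l with τ k < τ l < τ i < τ j, and no positions i < j < k < l with τ j < τ i < τ l < τ k. -/
/-- `τ` is skew-merged: its positions can be partitioned into a set on which `τ` is
strictly increasing and a set (the complement) on which `τ` is strictly decreasing. -/
def SkewMerged {n : ℕ} (τ : Equiv.Perm (Fin n)) : Prop :=
  ∃ S : Set (Fin n),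
    (∀ i ∈ S, ∀ j ∈ S, i < j → τ i < τ j) ∧
    (∀ i ∉ S, ∀ j ∉ S, i < j → τ j < τ i)

/-- Position `x` has type NE: it participates as a `3` in a `213`. -/
def TypeNE {n : ℕ} (τ : Equiv.Perm (Fin n)) (x : Fin n) : Prop :=
  ∃ j k : Fin n, j < k ∧ k < x ∧ τ k < τ j ∧ τ j < τ x

/-- Position `x` has type NW: it participates as a `3` in a `312`. -/
def TypeNW {n : ℕ} (τ : Equiv.Perm (Fin n)) (x : Fin n) : Prop :=
  ∃ j k : Fin n, x < j ∧ j < k ∧ τ j < τ k ∧ τ k < τ x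

/-- Position `x` has type SW: it participates as a `1` in a `132`. -/
def TypeSW {n : ℕ} (τ : Equiv.Perm (Fin n)) (x : Fin n) : Prop :=
  ∃ j k : Fin n, x < j ∧ j < k ∧ τ x < τ k ∧ τ k < τ j

/-- Position `x` has type SE: it participates as a `1` in a `231`. -/
def TypeSE {n : ℕ} (τ : Equiv.Perm (Fin n)) (x : Fin n) : Prop :=
  ∃ j k : Fin n, j < k ∧ k < x ∧ τ x < τ j ∧ τ j < τ k

/-- Position `x` is central: it has none of the four corner types. -/
def Central {n : ℕ} (τ : Equiv.Perm (Fin n)) (x : Fin n) : Prop :=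
  ¬ TypeNE τ x ∧ ¬ TypeNW τ x ∧ ¬ TypeSW τ x ∧ ¬ TypeSE τ x

section Aux

variable {n : ℕ} (τ : Equiv.Perm (Fin n))

private lemma flip_lt {x y : Fin n} (hne : x ≠ y) (h : ¬ τ x < τ y) : τ y < τ x :=
  (not_lt.mp h).lt_of_ne fun e => hne (τ.injective e).symm

/-- A red pair with an NE left point forces the right point to be SE. -/
private lemma lemA
    (h2 : ¬ ∃ i j k l : Fin n, i < j ∧ j < k ∧ k < l ∧ τ j < τ i ∧ τ i < τ l ∧ τ l < τ k)
    {x y : Fin n} (hxy : x < y) (hv : τ y < τ x) (h : TypeNE τ x) : TypeSE τ y := by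
  obtain ⟨c, d, hcd, hdx, ha, hb⟩ := h
  rcases lt_trichotomy (τ c) (τ y) with hc | hc | hc
  · exact absurd ⟨c, d, x, y, hcd, hdx, hxy, ha, hc, hv⟩ h2
  · exact absurd (τ.injective hc) (ne_of_lt ((hcd.trans hdx).trans hxy))
  · exact ⟨c, x, hcd.trans hdx, hxy, hc, hb⟩

/-- A red pair with an SW left point forces the right point to be SE. -/
private lemma lemB
    (h2 : ¬ ∃ i j k l : Fin n, i < j ∧ j < k ∧ k < l ∧ τ j < τ i ∧ τ i < τ l ∧ τ l < τ k)
    {x y : Fin n} (hxy : x < y) (hv : τ y < τ x) (h : TypeSW τ x) : TypeSE τ y := by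
  obtain ⟨a, b, hxa, hab, ha, hb⟩ := h
  rcases lt_trichotomy y a with hy | hy | hy
  · exact absurd ⟨x, y, a, b, hxy, hy, hab, hv, ha, hb⟩ h2
  · have hlt : τ y < τ a := hv.trans (ha.trans hb)
    exact absurd (hy ▸ hlt) (lt_irrefl _)
  · exact ⟨x, a, hxa, hy, hv, ha.trans hb⟩

/-- A red pair with an NE right point forces the left point to be NW. -/
private lemma lemC
    (h2 : ¬ ∃ i j k l : Fin n, i < j ∧ j < k ∧ k < l ∧ τ j < τ i ∧ τ i < τ l ∧ τ l < τ k)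
    {x y : Fin n} (hxy : x < y) (hv : τ y < τ x) (h : TypeNE τ y) : TypeNW τ x := by
  obtain ⟨c, d, hcd, hdy, ha, hb⟩ := h
  rcases lt_trichotomy x d with hx | hx | hx
  · exact ⟨d, y, hx, hdy, ha.trans hb, hv⟩
  · have hlt : τ d < τ x := (ha.trans hb).trans hv
    exact absurd (hx ▸ hlt) (lt_irrefl _)
  · exact absurd ⟨c, d, x, y, hcd, hx, hxy, ha, hb, hv⟩ h2

/-- A red pair with an SW right point forces the left point to be NW. -/
private lemma lemD
    (h2 : ¬ ∃ i j k l : Fin n, i < j ∧ j < k ∧ k < l ∧ τ j < τ i ∧ τ i < τ l ∧ τ l < τ k)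
    {x y : Fin n} (hxy : x < y) (hv : τ y < τ x) (h : TypeSW τ y) : TypeNW τ x := by
  obtain ⟨a, b, hya, hab, ha, hb⟩ := h
  rcases lt_trichotomy (τ x) (τ b) with hB | hB | hB
  · exact absurd ⟨x, y, a, b, hxy, hya, hab, hv, hB, hb⟩ h2
  · exact absurd (τ.injective hB) (ne_of_lt (hxy.trans (hya.trans hab)))
  · exact ⟨y, b, hxy, hya.trans hab, ha, hB⟩

/-- A blue pair with an SE left point forces the right point to be NE. -/
private lemma lemA'
    (h1 : ¬ ∃ i j k l : Fin n, i < j ∧ j < k ∧ k < l ∧ τ k < τ l ∧ τ l < τ i ∧ τ i < τ j)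
    {x y : Fin n} (hxy : x < y) (hv : τ x < τ y) (h : TypeSE τ x) : TypeNE τ y := by
  obtain ⟨c, d, hcd, hdx, ha, hb⟩ := h
  rcases lt_trichotomy (τ y) (τ c) with hc | hc | hc
  · exact absurd ⟨c, d, x, y, hcd, hdx, hxy, hv, hc, hb⟩ h1
  · exact absurd (τ.injective hc).symm (ne_of_lt ((hcd.trans hdx).trans hxy))
  · exact ⟨c, x, hcd.trans hdx, hxy, ha, hc⟩

/-- A blue pair with an NW left point forces the right point to be NE. -/
private lemma lemB'
    (h1 : ¬ ∃ i j k l : Fin n, i < j ∧ j < k ∧ k < l ∧ τ k < τ l ∧ τ l < τ i ∧ τ i < τ j)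
    {x y : Fin n} (hxy : x < y) (hv : τ x < τ y) (h : TypeNW τ x) : TypeNE τ y := by
  obtain ⟨a, b, hxa, hab, ha, hb⟩ := h
  rcases lt_trichotomy y a with hy | hy | hy
  · exact absurd ⟨x, y, a, b, hxy, hy, hab, ha, hb, hv⟩ h1
  · have hlt : τ a < τ y := (ha.trans hb).trans hv
    exact absurd (hy ▸ hlt) (lt_irrefl _)
  · exact ⟨x, a, hxa, hy, ha.trans hb, hv⟩

/-- A blue pair with an SE right point forces the left point to be SW. -/
private lemma lemC'
    (h1 : ¬ ∃ i j k l : Fin n, i < j ∧ j < k ∧ k < l ∧ τ k < τ l ∧ τ l < τ i ∧ τ i < τ j)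
    {x y : Fin n} (hxy : x < y) (hv : τ x < τ y) (h : TypeSE τ y) : TypeSW τ x := by
  obtain ⟨c, d, hcd, hdy, ha, hb⟩ := h
  rcases lt_trichotomy x d with hx | hx | hx
  · exact ⟨d, y, hx, hdy, hv, ha.trans hb⟩
  · have hlt : τ x < τ d := hv.trans (ha.trans hb)
    exact absurd (hx ▸ hlt) (lt_irrefl _)
  · exact absurd ⟨c, d, x, y, hcd, hx, hxy, hv, ha, hb⟩ h1

/-- A blue pair with an NW right point forces the left point to be SW. -/
private lemma lemD'
    (h1 : ¬ ∃ i j k l : Fin n, i < j ∧ j < k ∧ k < l ∧ τ k < τ l ∧ τ l < τ i ∧ τ i < τ j)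
    {x y : Fin n} (hxy : x < y) (hv : τ x < τ y) (h : TypeNW τ y) : TypeSW τ x := by
  obtain ⟨a, b, hya, hab, ha, hb⟩ := h
  rcases lt_trichotomy (τ b) (τ x) with hB | hB | hB
  · exact absurd ⟨x, y, a, b, hxy, hya, hab, ha, hB, hv⟩ h1
  · exact absurd (τ.injective hB) (ne_of_gt (hxy.trans (hya.trans hab)))
  · exact ⟨y, b, hxy, hya.trans hab, hB, hb⟩

/-- No point can be both NE and SE. -/
private lemma exclNESE
    (h1 : ¬ ∃ i j k l : Fin n, i < j ∧ j < k ∧ k < l ∧ τ k < τ l ∧ τ l < τ i ∧ τ i < τ j)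
    (h2 : ¬ ∃ i j k l : Fin n, i < j ∧ j < k ∧ k < l ∧ τ j < τ i ∧ τ i < τ l ∧ τ l < τ k)
    {x : Fin n} (hNE : TypeNE τ x) (hSE : TypeSE τ x) : False := by
  obtain ⟨a, b, hab, hbx, ha, hb⟩ := hNE
  obtain ⟨c, d, hcd, hdx, hc, hd⟩ := hSE
  rcases lt_trichotomy b d with h | h | h
  · exact h2 ⟨a, b, d, x, hab, h, hdx, ha, hb, hc.trans hd⟩
  · have hlt : τ b < τ d := (ha.trans hb).trans (hc.trans hd)
    exact absurd (h ▸ hlt) (lt_irrefl _)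
  · exact h1 ⟨c, d, b, x, hcd, h, hbx, ha.trans hb, hc, hd⟩

/-- No point can be both SW and SE. -/
private lemma exclSWSE
    (h1 : ¬ ∃ i j k l : Fin n, i < j ∧ j < k ∧ k < l ∧ τ k < τ l ∧ τ l < τ i ∧ τ i < τ j)
    (h2 : ¬ ∃ i j k l : Fin n, i < j ∧ j < k ∧ k < l ∧ τ j < τ i ∧ τ i < τ l ∧ τ l < τ k)
    {x : Fin n} (hSW : TypeSW τ x) (hSE : TypeSE τ x) : False := by
  obtain ⟨a, b, hxa, hab, ha, hb⟩ := hSW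
  obtain ⟨c, d, hcd, hdx, hc, hd⟩ := hSE
  rcases lt_trichotomy (τ b) (τ c) with h | h | h
  · exact h1 ⟨c, d, x, b, hcd, hdx, hxa.trans hab, ha, h, hd⟩
  · exact absurd (τ.injective h) (ne_of_gt (hcd.trans (hdx.trans (hxa.trans hab))))
  · exact h2 ⟨c, x, a, b, hcd.trans hdx, hxa, hab, hc, h, hb⟩

/-- A triple of central points is monotone. -/
private lemma mono3 {x y z : Fin n} (hx : Central τ x) (hy : Central τ y) (hz : Central τ z)
    (h1 : x < y) (h2 : y < z) :
    (τ x < τ y ∧ τ y < τ z) ∨ (τ z < τ y ∧ τ y < τ x) := by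
  rcases lt_trichotomy (τ x) (τ y) with ha | ha | ha
  · rcases lt_trichotomy (τ y) (τ z) with hb | hb | hb
    · exact Or.inl ⟨ha, hb⟩
    · exact absurd (τ.injective hb) (ne_of_lt h2)
    · rcases lt_trichotomy (τ x) (τ z) with hc | hc | hc
      · exact absurd (⟨y, z, h1, h2, hc, hb⟩ : TypeSW τ x) hx.2.2.1
      · exact absurd (τ.injective hc) (ne_of_lt (h1.trans h2))
      · exact absurd (⟨x, y, h1, h2, hc, ha⟩ : TypeSE τ z) hz.2.2.2
  · exact absurd (τ.injective ha) (ne_of_lt h1)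
  · rcases lt_trichotomy (τ y) (τ z) with hb | hb | hb
    · rcases lt_trichotomy (τ x) (τ z) with hc | hc | hc
      · exact absurd (⟨x, y, h1, h2, ha, hc⟩ : TypeNE τ z) hz.1
      · exact absurd (τ.injective hc) (ne_of_lt (h1.trans h2))
      · exact absurd (⟨y, z, h1, h2, hb, hc⟩ : TypeNW τ x) hx.2.1
    · exact absurd (τ.injective hb) (ne_of_lt h2)
    · exact Or.inr ⟨hb, ha⟩

end Aux

/-- a permutation is skew-merged iff it avoids both `3412` and `2143`. -/
theorem statement9 {n : ℕ} (τ : Equiv.Perm (Fin n)) :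
    SkewMerged τ ↔
      (¬ ∃ i j k l : Fin n, i < j ∧ j < k ∧ k < l ∧
          τ k < τ l ∧ τ l < τ i ∧ τ i < τ j) ∧
      (¬ ∃ i j k l : Fin n, i < j ∧ j < k ∧ k < l ∧
          τ j < τ i ∧ τ i < τ l ∧ τ l < τ k) := by
  constructor
  · rintro ⟨S, hinc, hdec⟩
    constructor
    · rintro ⟨i, j, k, l, hij, hjk, hkl, h1, h2, h3⟩
      have ha : i ∈ S ∨ j ∈ S := by
        by_contra h
        push_neg at h
        exact (hdec i h.1 j h.2 hij).asymm h3
      have hb : k ∈ S ∨ l ∈ S := by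
        by_contra h
        push_neg at h
        exact (hdec k h.1 l h.2 hkl).asymm h1
      rcases ha with ha | ha <;> rcases hb with hb | hb
      · exact (hinc i ha k hb (hij.trans hjk)).asymm (h1.trans h2)
      · exact (hinc i ha l hb ((hij.trans hjk).trans hkl)).asymm h2
      · exact (hinc j ha k hb hjk).asymm (h1.trans (h2.trans h3))
      · exact (hinc j ha l hb (hjk.trans hkl)).asymm (h2.trans h3)
    · rintro ⟨i, j, k, l, hij, hjk, hkl, h1, h2, h3⟩
      have ha : i ∉ S ∨ j ∉ S := by
        by_contra h
        push_neg at h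
        exact (hinc i h.1 j h.2 hij).asymm h1
      have hb : k ∉ S ∨ l ∉ S := by
        by_contra h
        push_neg at h
        exact (hinc k h.1 l h.2 hkl).asymm h3
      rcases ha with ha | ha <;> rcases hb with hb | hb
      · exact (hdec i ha k hb (hij.trans hjk)).asymm (h2.trans h3)
      · exact (hdec i ha l hb ((hij.trans hjk).trans hkl)).asymm h2
      · exact (hdec j ha k hb hjk).asymm (h1.trans (h2.trans h3))
      · exact (hdec j ha l hb (hjk.trans hkl)).asymm (h1.trans h2)
  · rintro ⟨h1, h2⟩
    refine ⟨{x | TypeNE τ x ∨ TypeSW τ x ∨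
      (Central τ x ∧ ∀ w, Central τ w → w < x → τ w < τ x)}, ?_, ?_⟩
    · intro x hx y hy hxy
      by_contra hc
      have hv : τ y < τ x := flip_lt τ (ne_of_lt hxy) hc
      simp only [Set.mem_setOf_eq] at hx hy
      rcases hx with hx | hx | hx
      · have hySE := lemA τ h2 hxy hv hx
        rcases hy with hy | hy | hy
        · exact exclNESE τ h1 h2 hy hySE
        · exact exclSWSE τ h1 h2 hy hySE
        · exact hy.1.2.2.2 hySE
      · have hySE := lemB τ h2 hxy hv hx
        rcases hy with hy | hy | hy
        · exact exclNESE τ h1 h2 hy hySE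
        · exact exclSWSE τ h1 h2 hy hySE
        · exact hy.1.2.2.2 hySE
      · rcases hy with hy | hy | hy
        · exact hx.1.2.1 (lemC τ h2 hxy hv hy)
        · exact hx.1.2.1 (lemD τ h2 hxy hv hy)
        · exact hc (hy.2 x hx.1 hxy)
    · intro x hx y hy hxy
      by_contra hc
      have hv : τ x < τ y := flip_lt τ (ne_of_gt hxy) hc
      simp only [Set.mem_setOf_eq] at hx hy
      push_neg at hx hy
      obtain ⟨hx1, hx2, hx3⟩ := hx
      obtain ⟨hy1, hy2, hy3⟩ := hy
      by_cases hxnw : TypeNW τ x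
      · exact hy1 (lemB' τ h1 hxy hv hxnw)
      by_cases hxse : TypeSE τ x
      · exact hy1 (lemA' τ h1 hxy hv hxse)
      have hcx : Central τ x := ⟨hx1, hxnw, hx2, hxse⟩
      by_cases hynw : TypeNW τ y
      · exact hx2 (lemD' τ h1 hxy hv hynw)
      by_cases hyse : TypeSE τ y
      · exact hx2 (lemC' τ h1 hxy hv hyse)
      have hcy : Central τ y := ⟨hy1, hynw, hy2, hyse⟩
      obtain ⟨w, hcw, hwx, hwv⟩ := hx3 hcx
      have hv2 : τ x < τ w := hwv.lt_of_ne fun e => (ne_of_lt hwx) (τ.injective e.symm)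
      rcases mono3 τ hcw hcx hcy hwx hxy with ⟨h, _⟩ | ⟨h, _⟩
      · exact h.asymm hv2
      · exact h.asymm hv
end

section
/- Let τ be a skew-merged permutation of size n, and let I, D be any partition of its positions such that τ is strictly increasing on I and strictly decreasing on D. Then every position of type NE or of type SW belongs to I, and every position of type NW or of type SE belongs to D. -/
/-- for any partition of the positions of a skew-merged permutation into
an increasing part `I` and a decreasing part `D`, every NE or SW position lies in `I`
and every NW or SE position lies in `D`. -/
theorem statement10 {n : ℕ} (τ : Equiv.Perm (Fin n)) (I D : Set (Fin n))
    (hunion : I ∪ D = Set.univ) (hdisj : I ∩ D = ∅)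
    (hI : ∀ i ∈ I, ∀ j ∈ I, i < j → τ i < τ j)
    (hD : ∀ i ∈ D, ∀ j ∈ D, i < j → τ j < τ i) :
    (∀ x : Fin n, TypeNE τ x ∨ TypeSW τ x → x ∈ I) ∧
    (∀ x : Fin n, TypeNW τ x ∨ TypeSE τ x → x ∈ D) := by
  have hmem : ∀ x : Fin n, x ∈ I ∨ x ∈ D := fun x => by
    have : x ∈ I ∪ D := hunion ▸ Set.mem_univ x
    exact this
  constructor
  · intro x hx
    rcases hmem x with h | hxD
    · exact h
    exfalso
    rcases hx with ⟨j, k, hjk, hkx, h1, h2⟩ | ⟨j, k, hxj, hjk, h1, h2⟩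
    · -- NE: j < k < x, τk < τj < τx, x ∈ D
      have hjI : j ∈ I := by
        rcases hmem j with h | h
        · exact h
        · exact absurd (hD j h x hxD (hjk.trans hkx)) (not_lt.mpr h2.le)
      have hkI : k ∈ I := by
        rcases hmem k with h | h
        · exact h
        · exact absurd (hD k h x hxD hkx) (not_lt.mpr (h1.trans h2).le)
      exact absurd (hI j hjI k hkI hjk) (not_lt.mpr h1.le)
    · -- SW: x < j < k, τx < τk < τj, x ∈ D
      have hjI : j ∈ I := by
        rcases hmem j with h | h
        · exact h
        · exact absurd (hD x hxD j h hxj) (not_lt.mpr (h1.trans h2).le)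
      have hkI : k ∈ I := by
        rcases hmem k with h | h
        · exact h
        · exact absurd (hD x hxD k h (hxj.trans hjk)) (not_lt.mpr h1.le)
      exact absurd (hI j hjI k hkI hjk) (not_lt.mpr h2.le)
  · intro x hx
    rcases hmem x with hxI | h
    swap
    · exact h
    exfalso
    rcases hx with ⟨j, k, hxj, hjk, h1, h2⟩ | ⟨j, k, hjk, hkx, h1, h2⟩
    · -- NW: x < j < k, τj < τk < τx, x ∈ I
      have hjD : j ∈ D := by
        rcases hmem j with h | h
        · exact absurd (hI x hxI j h hxj) (not_lt.mpr (h1.trans h2).le)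
        · exact h
      have hkD : k ∈ D := by
        rcases hmem k with h | h
        · exact absurd (hI x hxI k h (hxj.trans hjk)) (not_lt.mpr h2.le)
        · exact h
      exact absurd (hD j hjD k hkD hjk) (not_lt.mpr h1.le)
    · -- SE: j < k < x, τx < τj < τk, x ∈ I
      have hjD : j ∈ D := by
        rcases hmem j with h | h
        · exact absurd (hI j h x hxI (hjk.trans hkx)) (not_lt.mpr h1.le)
        · exact h
      have hkD : k ∈ D := by
        rcases hmem k with h | h
        · exact absurd (hI k h x hxI hkx) (not_lt.mpr (h1.trans h2).le)
        · exact h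
      exact absurd (hD j hjD k hkD hjk) (not_lt.mpr h2.le)
end

section
/- Let τ be a skew-merged permutation of size n. Then every position of τ has at most one of the four types NE, NW, SW, SE; i.e., the sets of NE, NW, SW and SE positions are pairwise disjoint. -/
/-- in a skew-merged permutation each position has at most one of the
four types NE, NW, SW, SE. -/
theorem statement11 {n : ℕ} (τ : Equiv.Perm (Fin n)) (hτ : SkewMerged τ) :
    ∀ x : Fin n,
      ¬ (TypeNE τ x ∧ TypeNW τ x) ∧ ¬ (TypeNE τ x ∧ TypeSW τ x) ∧
      ¬ (TypeNE τ x ∧ TypeSE τ x) ∧ ¬ (TypeNW τ x ∧ TypeSW τ x) ∧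
      ¬ (TypeNW τ x ∧ TypeSE τ x) ∧ ¬ (TypeSW τ x ∧ TypeSE τ x) := by
  obtain ⟨S, hI, hD⟩ := hτ
  intro x
  have hNE : TypeNE τ x → x ∈ S := by
    rintro ⟨j, k, hjk, hkx, h1, h2⟩
    by_contra hx
    have hkS : k ∈ S := by
      by_contra hk
      exact lt_asymm (h1.trans h2) (hD k hk x hx hkx)
    have hjS : j ∈ S := by
      by_contra hj
      exact lt_asymm h2 (hD j hj x hx (hjk.trans hkx))
    exact lt_asymm h1 (hI j hjS k hkS hjk)
  have hNW : TypeNW τ x → x ∉ S := by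
    rintro ⟨j, k, hxj, hjk, h1, h2⟩ hx
    have hjS : j ∉ S := fun hj => lt_asymm (h1.trans h2) (hI x hx j hj hxj)
    have hkS : k ∉ S := fun hk => lt_asymm h2 (hI x hx k hk (hxj.trans hjk))
    exact lt_asymm h1 (hD j hjS k hkS hjk)
  have hSW : TypeSW τ x → x ∈ S := by
    rintro ⟨j, k, hxj, hjk, h1, h2⟩
    by_contra hx
    have hjS : j ∈ S := by
      by_contra hj
      exact lt_asymm (h1.trans h2) (hD x hx j hj hxj)
    have hkS : k ∈ S := by
      by_contra hk
      exact lt_asymm h1 (hD x hx k hk (hxj.trans hjk))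
    exact lt_asymm h2 (hI j hjS k hkS hjk)
  have hSE : TypeSE τ x → x ∉ S := by
    rintro ⟨j, k, hjk, hkx, h1, h2⟩ hx
    have hjS : j ∉ S := fun hj => lt_asymm h1 (hI j hj x hx (hjk.trans hkx))
    have hkS : k ∉ S := fun hk => lt_asymm (h1.trans h2) (hI k hk x hx hkx)
    exact lt_asymm h2 (hD j hjS k hkS hjk)
  refine ⟨fun ⟨a, b⟩ => hNW b (hNE a), ?_, fun ⟨a, b⟩ => hSE b (hNE a),
    fun ⟨a, b⟩ => hNW a (hSW b), ?_, fun ⟨a, b⟩ => hSE b (hSW a)⟩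
  · -- NE & SW
    rintro ⟨⟨j, k, hjk, hkx, h1, h2⟩, ⟨j', k', hxj', hj'k', h1', h2'⟩⟩
    -- values: τ k < τ j < τ x < τ k' < τ j'; some m ∈ {j,k} is not in S
    obtain ⟨m, hm, hmx, hmv⟩ : ∃ m, m ∉ S ∧ m < x ∧ τ m < τ x := by
      by_cases hj : j ∈ S
      · exact ⟨k, fun hk => lt_asymm h1 (hI j hj k hk hjk), hkx, h1.trans h2⟩
      · exact ⟨j, hj, hjk.trans hkx, h2⟩
    have hj'S : j' ∈ S := by
      by_contra hj'
      exact lt_asymm (hmv.trans (h1'.trans h2')) (hD m hm j' hj' (hmx.trans hxj'))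
    have hk'S : k' ∈ S := by
      by_contra hk'
      exact lt_asymm (hmv.trans h1') (hD m hm k' hk' (hmx.trans (hxj'.trans hj'k')))
    exact lt_asymm h2' (hI j' hj'S k' hk'S hj'k')
  · -- NW & SE
    rintro ⟨⟨j', k', hxj', hj'k', h1', h2'⟩, ⟨j, k, hjk, hkx, h1, h2⟩⟩
    -- SE: j < k < x, τ x < τ j < τ k; NW: x < j' < k', τ j' < τ k' < τ x
    obtain ⟨m, hm, hmx, hmv⟩ : ∃ m, m ∈ S ∧ m < x ∧ τ x < τ m := by
      by_cases hj : j ∈ S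
      · exact ⟨j, hj, hjk.trans hkx, h1⟩
      · refine ⟨k, ?_, hkx, h1.trans h2⟩
        by_contra hk
        exact lt_asymm h2 (hD j hj k hk hjk)
    obtain ⟨m', hm', hxm', hm'v⟩ : ∃ m', m' ∈ S ∧ x < m' ∧ τ m' < τ x := by
      by_cases hj' : j' ∈ S
      · exact ⟨j', hj', hxj', h1'.trans h2'⟩
      · refine ⟨k', ?_, hxj'.trans hj'k', h2'⟩
        by_contra hk'
        exact lt_asymm h1' (hD j' hj' k' hk' hj'k')
    exact lt_asymm (hm'v.trans hmv) (hI m hm m' hm' (hmx.trans hxm'))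
end

section
/- Let τ be a skew-merged permutation of size n. If x is a position of type SW and y is a position of type NE, then x lies strictly to the left of and strictly below y, i.e., x < y and τ x < τ y. -/
/-- in a skew-merged permutation, every SW position lies strictly to the
left of and strictly below every NE position. -/
theorem statement12 {n : ℕ} (τ : Equiv.Perm (Fin n)) (hτ : SkewMerged τ)
    (x y : Fin n) (hx : TypeSW τ x) (hy : TypeNE τ y) :
    x < y ∧ τ x < τ y := by
  obtain ⟨S, hI, hD⟩ := hτ
  obtain ⟨j, k, hxj, hjk, hxk, hkj⟩ := hx
  obtain ⟨j', k', hj'k', hk'y, hk'j', hj'y⟩ := hy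
  have hd : ∃ d, d ∉ S ∧ x < d ∧ τ x < τ d := by
    by_cases hj : j ∈ S
    · refine ⟨k, fun hk => absurd (hI j hj k hk hjk) (not_lt.2 hkj.le), hxj.trans hjk, hxk⟩
    · exact ⟨j, hj, hxj, hxk.trans hkj⟩
  have hd' : ∃ d, d ∉ S ∧ d < y ∧ τ d < τ y := by
    by_cases hj' : j' ∈ S
    · refine ⟨k', fun hk' => absurd (hI j' hj' k' hk' hj'k') (not_lt.2 hk'j'.le), hk'y,
        hk'j'.trans hj'y⟩
    · exact ⟨j', hj', hj'k'.trans hk'y, hj'y⟩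
  obtain ⟨d, hdS, hxd, hτxd⟩ := hd
  obtain ⟨d', hd'S, hd'y, hτd'y⟩ := hd'
  have hxS : x ∈ S := by
    by_contra hxS
    exact absurd (hD x hxS d hdS hxd) (not_lt.2 hτxd.le)
  have hyS : y ∈ S := by
    by_contra hyS
    exact absurd (hD d' hd'S y hyS hd'y) (not_lt.2 hτd'y.le)
  have hxy : x < y := by
    by_contra h
    have hyx : y ≤ x := not_lt.1 h
    have h1 : d' < d := lt_of_le_of_lt (hd'y.le.trans hyx) hxd
    have h2 : τ d < τ d' := hD d' hd'S d hdS h1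
    have h3 : τ y ≤ τ x := by
      rcases lt_or_eq_of_le hyx with h' | h'
      · exact (hI y hyS x hxS h').le
      · exact le_of_eq (congrArg τ h')
    exact absurd (hτd'y.trans (lt_of_le_of_lt h3 hτxd)) (not_lt.2 h2.le)
  exact ⟨hxy, hI x hxS y hyS hxy⟩
end

section
/- Let τ be a skew-merged permutation of size n. Then: every position of type NW lies strictly to the left of every position of type NE; every position of type SW lies strictly to the left of every position of type SE; every position of type NE lies strictly above every position of type SE (its value is strictly greater); every position of type NW lies strictly above every position of type SW; and every position of type NW lies strictly to the left of and strictly above every position of type SE. -/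
/-- relative positions of the four corner regions of a skew-merged
permutation: NW is left of NE; SW is left of SE; NE is above SE; NW is above SW;
NW is left of and above SE. -/
theorem statement13 {n : ℕ} (τ : Equiv.Perm (Fin n)) (hτ : SkewMerged τ) :
    (∀ x y : Fin n, TypeNW τ x → TypeNE τ y → x < y) ∧
    (∀ x y : Fin n, TypeSW τ x → TypeSE τ y → x < y) ∧
    (∀ x y : Fin n, TypeNE τ x → TypeSE τ y → τ y < τ x) ∧
    (∀ x y : Fin n, TypeNW τ x → TypeSW τ y → τ y < τ x) ∧
    (∀ x y : Fin n, TypeNW τ x → TypeSE τ y → x < y ∧ τ y < τ x) := by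
  obtain ⟨S, hS, hD⟩ := hτ
  have hNE : ∀ x, TypeNE τ x → x ∈ S ∧ ∃ d, d ∉ S ∧ d < x ∧ τ d < τ x := by
    rintro x ⟨j, k, hjk, hkx, h1, h2⟩
    have hd : ∃ d, d ∉ S ∧ d < x ∧ τ d < τ x := by
      by_cases hj : j ∈ S
      · exact ⟨k, fun hk => lt_asymm h1 (hS j hj k hk hjk), hkx, h1.trans h2⟩
      · exact ⟨j, hj, hjk.trans hkx, h2⟩
    obtain ⟨d, hd, hdx, hdv⟩ := hd
    refine ⟨?_, d, hd, hdx, hdv⟩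
    by_contra hx
    exact lt_asymm hdv (hD d hd x hx hdx)
  have hSW : ∀ x, TypeSW τ x → x ∈ S ∧ ∃ d, d ∉ S ∧ x < d ∧ τ x < τ d := by
    rintro x ⟨j, k, hxj, hjk, h1, h2⟩
    have hd : ∃ d, d ∉ S ∧ x < d ∧ τ x < τ d := by
      by_cases hj : j ∈ S
      · exact ⟨k, fun hk => lt_asymm h2 (hS j hj k hk hjk), hxj.trans hjk, h1⟩
      · exact ⟨j, hj, hxj, h1.trans h2⟩
    obtain ⟨d, hd, hdx, hdv⟩ := hd
    refine ⟨?_, d, hd, hdx, hdv⟩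
    by_contra hx
    exact lt_asymm hdv (hD x hx d hd hdx)
  have hNW : ∀ x, TypeNW τ x → x ∉ S ∧ ∃ s, s ∈ S ∧ x < s ∧ τ s < τ x := by
    rintro x ⟨j, k, hxj, hjk, h1, h2⟩
    have hs : ∃ s, s ∈ S ∧ x < s ∧ τ s < τ x := by
      by_cases hj : j ∈ S
      · exact ⟨j, hj, hxj, h1.trans h2⟩
      · refine ⟨k, ?_, hxj.trans hjk, h2⟩
        by_contra hk
        exact lt_asymm h1 (hD j hj k hk hjk)
    obtain ⟨s, hs, hsx, hsv⟩ := hs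
    refine ⟨?_, s, hs, hsx, hsv⟩
    intro hx
    exact lt_asymm hsv (hS x hx s hs hsx)
  have hSE : ∀ x, TypeSE τ x → x ∉ S ∧ ∃ s, s ∈ S ∧ s < x ∧ τ x < τ s := by
    rintro x ⟨j, k, hjk, hkx, h1, h2⟩
    have hs : ∃ s, s ∈ S ∧ s < x ∧ τ x < τ s := by
      by_cases hj : j ∈ S
      · exact ⟨j, hj, hjk.trans hkx, h1⟩
      · refine ⟨k, ?_, hkx, h1.trans h2⟩
        by_contra hk
        exact lt_asymm h2 (hD j hj k hk hjk)
    obtain ⟨s, hs, hsx, hsv⟩ := hs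
    refine ⟨?_, s, hs, hsx, hsv⟩
    intro hx
    exact lt_asymm hsv (hS s hs x hx hsx)
  refine ⟨?_, ?_, ?_, ?_, ?_⟩
  · -- NW left of NE
    intro x y hx hy
    obtain ⟨hxS, s, hs, hxs, hsv⟩ := hNW x hx
    obtain ⟨hyS, d, hd, hdy, hdv⟩ := hNE y hy
    rcases lt_trichotomy x y with h | h | h
    · exact h
    · exact absurd (h ▸ hyS) hxS
    · have h1 : τ x < τ d := hD d hd x hxS (hdy.trans h)
      have h2 : τ y < τ s := hS y hyS s hs (h.trans hxs)
      exact absurd ((h1.trans hdv).trans (h2.trans hsv)) (lt_irrefl _)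
  · -- SW left of SE
    intro x y hx hy
    obtain ⟨hxS, d, hd, hxd, hdv⟩ := hSW x hx
    obtain ⟨hyS, s, hs, hsy, hsv⟩ := hSE y hy
    rcases lt_trichotomy x y with h | h | h
    · exact h
    · exact absurd (h ▸ hyS) (not_not_intro hxS)
    · have h1 : τ s < τ x := hS s hs x hxS (hsy.trans h)
      have h2 : τ d < τ y := hD y hyS d hd (h.trans hxd)
      exact absurd ((hdv.trans h2).trans (hsv.trans h1)) (lt_irrefl _)
  · -- NE above SE
    intro x y hx hy
    obtain ⟨hxS, d, hd, hdx, hdv⟩ := hNE x hx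
    obtain ⟨hyS, s, hs, hsy, hsv⟩ := hSE y hy
    rcases lt_trichotomy y d with h | h | h
    · have h1 : τ s < τ x := hS s hs x hxS (hsy.trans (h.trans hdx))
      exact hsv.trans h1
    · exact h ▸ hdv
    · exact (hD d hd y hyS h).trans hdv
  · -- NW above SW
    intro x y hx hy
    obtain ⟨hxS, s, hs, hxs, hsv⟩ := hNW x hx
    obtain ⟨hyS, d, hd, hyd, hdv⟩ := hSW y hy
    rcases lt_trichotomy x d with h | h | h
    · exact hdv.trans (hD x hxS d hd h)
    · exact h ▸ hdv
    · have h1 : τ y < τ s := hS y hyS s hs ((hyd.trans h).trans hxs)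
      exact h1.trans hsv
  · -- NW left of and above SE
    intro x y hx hy
    obtain ⟨hxS, s, hs, hxs, hsv⟩ := hNW x hx
    obtain ⟨hyS, s', hs', hsy, hsv'⟩ := hSE y hy
    have hxy : x < y := by
      rcases lt_trichotomy x y with h | h | h
      · exact h
      · have h1 : τ s' < τ s := hS s' hs' s hs ((h ▸ hsy).trans hxs)
        exact absurd ((hsv.trans (h ▸ hsv')).trans h1) (lt_irrefl _)
      · have h1 : τ s' < τ s := hS s' hs' s hs ((hsy.trans h).trans hxs)
        have h2 : τ x < τ y := hD y hyS x hxS h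
        exact absurd ((hsv.trans h2).trans ((hsv'.trans h1))) (lt_irrefl _)
    exact ⟨hxy, hD x hxS y hyS hxy⟩
end

section
/- Let τ be a skew-merged permutation of size n. Then the central positions of τ form a monotone subsequence: either τ i < τ j for all central positions i < j, or τ i > τ j for all central positions i < j. -/
/-- No "peak" with central endpoints: if `x < y < z`, `τ x < τ y`, `τ z < τ y`,
and `x`, `z` are central, we get a contradiction. -/
theorem peak_aux {n : ℕ} (τ : Equiv.Perm (Fin n)) {x y z : Fin n}
    (hx : Central τ x) (hz : Central τ z) (hxy : x < y) (hyz : y < z)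
    (h1 : τ x < τ y) (h2 : τ z < τ y) : False := by
  rcases lt_trichotomy (τ x) (τ z) with h | h | h
  · exact hx.2.2.1 ⟨y, z, hxy, hyz, h, h2⟩
  · exact absurd (τ.injective h) (ne_of_lt (hxy.trans hyz))
  · exact hz.2.2.2 ⟨x, y, hxy, hyz, h, h1⟩

/-- No "valley" with central endpoints: if `x < y < z`, `τ y < τ x`, `τ y < τ z`,
and `x`, `z` are central, we get a contradiction. -/
theorem valley_aux {n : ℕ} (τ : Equiv.Perm (Fin n)) {x y z : Fin n}
    (hx : Central τ x) (hz : Central τ z) (hxy : x < y) (hyz : y < z)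
    (h1 : τ y < τ x) (h2 : τ y < τ z) : False := by
  rcases lt_trichotomy (τ x) (τ z) with h | h | h
  · exact hz.1 ⟨x, y, hxy, hyz, h1, h⟩
  · exact absurd (τ.injective h) (ne_of_lt (hxy.trans hyz))
  · exact hx.2.1 ⟨y, z, hxy, hyz, h2, h⟩

/-- the central positions of a skew-merged permutation form a monotone
subsequence. -/
theorem statement14 {n : ℕ} (τ : Equiv.Perm (Fin n)) (hτ : SkewMerged τ) :
    (∀ i j : Fin n, Central τ i → Central τ j → i < j → τ i < τ j) ∨
    (∀ i j : Fin n, Central τ i → Central τ j → i < j → τ j < τ i) := by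
  by_cases hasc : ∀ i j : Fin n, Central τ i → Central τ j → i < j → τ i < τ j
  · exact Or.inl hasc
  push_neg at hasc
  obtain ⟨p, q, hp, hq, hpq, hnd⟩ := hasc
  have hdesc : τ q < τ p :=
    lt_of_le_of_ne hnd fun h => (ne_of_lt hpq) (τ.injective h).symm
  right
  intro i j hi hj hij
  by_contra hnot
  have hascij : τ i < τ j :=
    lt_of_le_of_ne (not_lt.mp hnot) fun h => (ne_of_lt hij) (τ.injective h)
  -- now four central positions: i < j with τ i < τ j, p < q with τ q < τ p
  rcases le_or_gt q i with hqi | hiq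
  · -- p < q ≤ i < j
    have hpi : p < i := lt_of_lt_of_le hpq hqi
    rcases lt_trichotomy (τ j) (τ p) with h | h | h
    · exact valley_aux τ hp hj hpi hij (hascij.trans h) hascij
    · exact absurd (τ.injective h) (ne_of_lt (hpi.trans hij)).symm
    · exact valley_aux τ hp hj hpq (lt_of_le_of_lt hqi hij) hdesc (hdesc.trans h)
  rcases le_or_gt j p with hjp | hpj
  · -- i < j ≤ p < q
    have hjq : j < q := lt_of_le_of_lt hjp hpq
    rcases lt_trichotomy (τ i) (τ q) with h | h | h
    · exact peak_aux τ hi hq (lt_of_lt_of_le hij hjp) hpq (h.trans hdesc) hdesc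
    · exact absurd (τ.injective h) (ne_of_lt hiq)
    · exact peak_aux τ hi hq hij hjq hascij (h.trans hascij)
  -- now p < j and i < q
  rcases lt_trichotomy i p with hip | hip | hip
  · -- i < p < j
    rcases lt_trichotomy (τ j) (τ p) with h1 | h1 | h1
    · exact peak_aux τ hi hj hip hpj (hascij.trans h1) h1
    · exact absurd (τ.injective h1) (ne_of_lt hpj).symm
    · rcases lt_trichotomy (τ p) (τ i) with h2 | h2 | h2
      · exact valley_aux τ hi hj hip hpj h2 (h2.trans hascij)
      · exact absurd (τ.injective h2) (ne_of_lt hip).symm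
      · rcases lt_trichotomy q j with h3 | h3 | h3
        · exact valley_aux τ hp hj hpq h3 hdesc (hdesc.trans h1)
        · exact absurd (congrArg τ h3) (ne_of_lt (hdesc.trans h1))
        · exact peak_aux τ hp hq hpj h3 h1 (hdesc.trans h1)
  · -- i = p
    subst hip
    rcases lt_trichotomy q j with h3 | h3 | h3
    · exact valley_aux τ hi hj hpq h3 hdesc (hdesc.trans hascij)
    · exact absurd (congrArg τ h3) (ne_of_lt (hdesc.trans hascij))
    · exact peak_aux τ hi hq hij h3 hascij (hdesc.trans hascij)
  · -- p < i < q
    rcases lt_trichotomy (τ p) (τ i) with h1 | h1 | h1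
    · exact peak_aux τ hp hq hip hiq h1 (hdesc.trans h1)
    · exact absurd (τ.injective h1) (ne_of_lt hip)
    · rcases lt_trichotomy (τ i) (τ q) with h2 | h2 | h2
      · exact valley_aux τ hp hq hip hiq h1 h2
      · exact absurd (τ.injective h2) (ne_of_lt hiq)
      · rcases lt_trichotomy j q with h3 | h3 | h3
        · exact peak_aux τ hi hq hij h3 hascij (h2.trans hascij)
        · exact absurd (congrArg τ h3) (ne_of_lt (h2.trans hascij)).symm
        · exact valley_aux τ hi hj hiq h3 h2 (h2.trans hascij)
end

section
/- Let π be a skew-merged permutation of size k with no central positions, let τ be a skew-merged permutation of size n, and let e₁, e₂ be embeddings of π into τ that preserve types (each position of type NE, NW, SW, SE is mapped to a position of the same type in τ). Define f : Fin k → Fin n by f(x) = min(e₁ x, e₂ x) (as positions) if x has type SW or NW, and f(x) = max(e₁ x, e₂ x) if x has type NE or SE. Then f is an embedding of π into τ. -/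
section Aux

variable {m : ℕ} {σ : Equiv.Perm (Fin m)} {S : Set (Fin m)}

lemma mem_of_ne' (hS : ∀ i ∈ S, ∀ j ∈ S, i < j → σ i < σ j)
    (hD : ∀ i ∉ S, ∀ j ∉ S, i < j → σ j < σ i)
    {x : Fin m} (h : TypeNE σ x) :
    x ∈ S ∧ ∃ d, d ∉ S ∧ d < x ∧ σ d < σ x := by
  obtain ⟨j, k, hjk, hkx, h1, h2⟩ := h
  have hd : ∃ d, d ∉ S ∧ d < x ∧ σ d < σ x := by
    by_cases hj : j ∈ S
    · by_cases hk : k ∈ S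
      · exact absurd (hS j hj k hk hjk) (asymm h1)
      · exact ⟨k, hk, hkx, lt_trans h1 h2⟩
    · exact ⟨j, hj, lt_trans hjk hkx, h2⟩
  obtain ⟨d, hdS, hdx, hdv⟩ := hd
  refine ⟨?_, d, hdS, hdx, hdv⟩
  by_contra hx
  exact absurd (hD d hdS x hx hdx) (asymm hdv)

lemma mem_of_sw' (hS : ∀ i ∈ S, ∀ j ∈ S, i < j → σ i < σ j)
    (hD : ∀ i ∉ S, ∀ j ∉ S, i < j → σ j < σ i)
    {x : Fin m} (h : TypeSW σ x) :
    x ∈ S ∧ ∃ d, d ∉ S ∧ x < d ∧ σ x < σ d := by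
  obtain ⟨j, k, hxj, hjk, h1, h2⟩ := h
  have hd : ∃ d, d ∉ S ∧ x < d ∧ σ x < σ d := by
    by_cases hj : j ∈ S
    · by_cases hk : k ∈ S
      · exact absurd (hS j hj k hk hjk) (asymm h2)
      · exact ⟨k, hk, lt_trans hxj hjk, h1⟩
    · exact ⟨j, hj, hxj, lt_trans h1 h2⟩
  obtain ⟨d, hdS, hxd, hdv⟩ := hd
  refine ⟨?_, d, hdS, hxd, hdv⟩
  by_contra hx
  exact absurd (hD x hx d hdS hxd) (asymm hdv)

lemma mem_of_nw' (hS : ∀ i ∈ S, ∀ j ∈ S, i < j → σ i < σ j)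
    (hD : ∀ i ∉ S, ∀ j ∉ S, i < j → σ j < σ i)
    {x : Fin m} (h : TypeNW σ x) :
    x ∉ S ∧ ∃ u, u ∈ S ∧ x < u ∧ σ u < σ x := by
  obtain ⟨j, k, hxj, hjk, h1, h2⟩ := h
  have hu : ∃ u, u ∈ S ∧ x < u ∧ σ u < σ x := by
    by_cases hj : j ∈ S
    · exact ⟨j, hj, hxj, lt_trans h1 h2⟩
    · by_cases hk : k ∈ S
      · exact ⟨k, hk, lt_trans hxj hjk, h2⟩
      · exact absurd (hD j hj k hk hjk) (asymm h1)
  obtain ⟨u, huS, hxu, huv⟩ := hu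
  refine ⟨?_, u, huS, hxu, huv⟩
  intro hx
  exact absurd (hS x hx u huS hxu) (asymm huv)

lemma mem_of_se' (hS : ∀ i ∈ S, ∀ j ∈ S, i < j → σ i < σ j)
    (hD : ∀ i ∉ S, ∀ j ∉ S, i < j → σ j < σ i)
    {x : Fin m} (h : TypeSE σ x) :
    x ∉ S ∧ ∃ u, u ∈ S ∧ u < x ∧ σ x < σ u := by
  obtain ⟨j, k, hjk, hkx, h1, h2⟩ := h
  have hu : ∃ u, u ∈ S ∧ u < x ∧ σ x < σ u := by
    by_cases hj : j ∈ S
    · exact ⟨j, hj, lt_trans hjk hkx, h1⟩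
    · by_cases hk : k ∈ S
      · exact ⟨k, hk, hkx, lt_trans h1 h2⟩
      · exact absurd (hD j hj k hk hjk) (asymm h2)
  obtain ⟨u, huS, hux, huv⟩ := hu
  refine ⟨?_, u, huS, hux, huv⟩
  intro hx
  exact absurd (hS u huS x hx hux) (asymm huv)

/-- In a skew-merged permutation, an East-type position cannot strictly precede a
West-type position. -/
lemma east_west (h : SkewMerged σ) {a b : Fin m}
    (ha : TypeNE σ a ∨ TypeSE σ a) (hb : TypeSW σ b ∨ TypeNW σ b)
    (hab : a < b) : False := by
  obtain ⟨S, hS, hD⟩ := h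
  rcases ha with ha | ha
  · obtain ⟨haS, d, hdS, hda, hdv⟩ := mem_of_ne' hS hD ha
    rcases hb with hb | hb
    · obtain ⟨hbS, d', hd'S, hbd', hbv⟩ := mem_of_sw' hS hD hb
      have h1 : σ a < σ b := hS a haS b hbS hab
      have h2 : σ d' < σ d := hD d hdS d' hd'S (hda.trans (hab.trans hbd'))
      exact absurd (hdv.trans (h1.trans hbv)) (asymm h2)
    · obtain ⟨hbS, u, huS, hbu, hbv⟩ := mem_of_nw' hS hD hb
      have h1 : σ b < σ d := hD d hdS b hbS (hda.trans hab)
      have h2 : σ a < σ u := hS a haS u huS (hab.trans hbu)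
      exact absurd (h2.trans (hbv.trans (h1.trans hdv))) (lt_irrefl _)
  · obtain ⟨haS, u, huS, hua, huv⟩ := mem_of_se' hS hD ha
    rcases hb with hb | hb
    · obtain ⟨hbS, d', hd'S, hbd', hbv⟩ := mem_of_sw' hS hD hb
      have h1 : σ u < σ b := hS u huS b hbS (hua.trans hab)
      have h2 : σ d' < σ a := hD a haS d' hd'S (hab.trans hbd')
      exact absurd (huv.trans (h1.trans (hbv.trans h2))) (lt_irrefl _)
    · obtain ⟨hbS, u', hu'S, hbu', hbv⟩ := mem_of_nw' hS hD hb
      have h1 : σ b < σ a := hD a haS b hbS hab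
      have h2 : σ u < σ u' := hS u huS u' hu'S (hua.trans (hab.trans hbu'))
      exact absurd (huv.trans (h2.trans (hbv.trans h1))) (lt_irrefl _)

/-- In a skew-merged permutation, a North-type position cannot have its value
strictly below the value of a South-type position. -/
lemma north_south (h : SkewMerged σ) {a b : Fin m}
    (ha : TypeNE σ a ∨ TypeNW σ a) (hb : TypeSW σ b ∨ TypeSE σ b)
    (hab : σ a < σ b) : False := by
  obtain ⟨S, hS, hD⟩ := h
  rcases ha with ha | ha
  · obtain ⟨haS, d, hdS, hda, hdv⟩ := mem_of_ne' hS hD ha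
    rcases hb with hb | hb
    · obtain ⟨hbS, d', hd'S, hbd', hbv⟩ := mem_of_sw' hS hD hb
      have hpos : a < b := by
        rcases lt_trichotomy a b with h' | h' | h'
        · exact h'
        · exact absurd hab (by rw [h']; exact lt_irrefl _)
        · exact absurd (hS b hbS a haS h') (asymm hab)
      have h2 : σ d' < σ d := hD d hdS d' hd'S (hda.trans (hpos.trans hbd'))
      exact absurd (hdv.trans (hab.trans hbv)) (asymm h2)
    · obtain ⟨hbS, u, huS, hub, hbv⟩ := mem_of_se' hS hD hb
      have hbd : b < d := by
        rcases lt_trichotomy d b with h' | h' | h'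
        · exact absurd (hD d hdS b hbS h') (asymm (hdv.trans hab))
        · exact absurd (hdv.trans hab) (by rw [h']; exact lt_irrefl _)
        · exact h'
      have h2 : σ u < σ a := hS u huS a haS (hub.trans (hbd.trans hda))
      exact absurd ((hab.trans hbv).trans h2) (lt_irrefl _)
  · obtain ⟨haS, u, huS, hau, huv⟩ := mem_of_nw' hS hD ha
    rcases hb with hb | hb
    · obtain ⟨hbS, d', hd'S, hbd', hbv⟩ := mem_of_sw' hS hD hb
      have hub : u < b := by
        rcases lt_trichotomy u b with h' | h' | h'
        · exact h'
        · exact absurd (huv.trans hab) (by rw [h']; exact lt_irrefl _)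
        · exact absurd (hS b hbS u huS h') (asymm (huv.trans hab))
      have hd'a : d' < a := by
        rcases lt_trichotomy a d' with h' | h' | h'
        · exact absurd (hD a haS d' hd'S h') (asymm (hab.trans hbv))
        · exact absurd (hab.trans hbv) (by rw [h']; exact lt_irrefl _)
        · exact h'
      exact absurd (hau.trans (hub.trans (hbd'.trans hd'a))) (lt_irrefl _)
    · obtain ⟨hbS, u', hu'S, hu'b, hbv⟩ := mem_of_se' hS hD hb
      have hba : b < a := by
        rcases lt_trichotomy a b with h' | h' | h'
        · exact absurd (hD a haS b hbS h') (asymm hab)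
        · exact absurd hab (by rw [h']; exact lt_irrefl _)
        · exact h'
      have h2 : σ u' < σ u := hS u' hu'S u huS (hu'b.trans (hba.trans hau))
      exact absurd (hab.trans (hbv.trans (h2.trans huv))) (lt_irrefl _)

end Aux
/-- for a skew-merged pattern `π` with no central positions and two
type-preserving embeddings `e₁, e₂` of `π` into a skew-merged `τ`, the map sending a
West-type (SW or NW) position `x` to `min (e₁ x) (e₂ x)` and an East-type (NE or SE)
position `x` to `max (e₁ x) (e₂ x)` is again an embedding of `π` into `τ`. -/
theorem statement16 {k n : ℕ} (π : Equiv.Perm (Fin k)) (τ : Equiv.Perm (Fin n))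
    (hπ : SkewMerged π) (hτ : SkewMerged τ)
    (hnc : ∀ x : Fin k, ¬ Central π x)
    (e₁ e₂ : Fin k → Fin n)
    (he₁ : IsEmbedding π τ e₁) (he₂ : IsEmbedding π τ e₂)
    (ht₁ : ∀ x : Fin k,
      (TypeNE π x → TypeNE τ (e₁ x)) ∧ (TypeNW π x → TypeNW τ (e₁ x)) ∧
      (TypeSW π x → TypeSW τ (e₁ x)) ∧ (TypeSE π x → TypeSE τ (e₁ x)))
    (ht₂ : ∀ x : Fin k,
      (TypeNE π x → TypeNE τ (e₂ x)) ∧ (TypeNW π x → TypeNW τ (e₂ x)) ∧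
      (TypeSW π x → TypeSW τ (e₂ x)) ∧ (TypeSE π x → TypeSE τ (e₂ x)))
    (f : Fin k → Fin n)
    (hf : ∀ x : Fin k,
      ((TypeSW π x ∨ TypeNW π x) → f x = min (e₁ x) (e₂ x)) ∧
      ((TypeNE π x ∨ TypeSE π x) → f x = max (e₁ x) (e₂ x))) :
    IsEmbedding π τ f := by
  obtain ⟨Sτ, hSτ, hDτ⟩ := hτ
  -- every position has some type
  have hsome : ∀ x : Fin k, TypeNE π x ∨ TypeNW π x ∨ TypeSW π x ∨ TypeSE π x := by
    intro x
    have h := hnc x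
    unfold Central at h
    tauto
  -- monotonicity
  have hmono : StrictMono f := by
    intro i j hij
    by_cases hiW : TypeSW π i ∨ TypeNW π i
    · rw [(hf i).1 hiW]
      by_cases hjW : TypeSW π j ∨ TypeNW π j
      · rw [(hf j).1 hjW]
        exact min_lt_min (he₁.1 hij) (he₂.1 hij)
      · have hjE : TypeNE π j ∨ TypeSE π j := by have := hsome j; tauto
        rw [(hf j).2 hjE]
        exact lt_of_le_of_lt (min_le_left _ _)
          (lt_of_lt_of_le (he₁.1 hij) (le_max_left _ _))
    · have hiE : TypeNE π i ∨ TypeSE π i := by have := hsome i; tauto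
      rw [(hf i).2 hiE]
      by_cases hjW : TypeSW π j ∨ TypeNW π j
      · exact absurd hij (fun h => east_west hπ hiE hjW h)
      · have hjE : TypeNE π j ∨ TypeSE π j := by have := hsome j; tauto
        rw [(hf j).2 hjE]
        exact max_lt_max (he₁.1 hij) (he₂.1 hij)
  -- computing τ of min/max
  have hmaxS : ∀ a b : Fin n, a ∈ Sτ → b ∈ Sτ → τ (max a b) = max (τ a) (τ b) := by
    intro a b ha hb
    rcases lt_trichotomy a b with h | h | h
    · rw [max_eq_right h.le, max_eq_right (hSτ a ha b hb h).le]
    · rw [h, max_self, max_self]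
    · rw [max_eq_left h.le, max_eq_left (hSτ b hb a ha h).le]
  have hminS : ∀ a b : Fin n, a ∈ Sτ → b ∈ Sτ → τ (min a b) = min (τ a) (τ b) := by
    intro a b ha hb
    rcases lt_trichotomy a b with h | h | h
    · rw [min_eq_left h.le, min_eq_left (hSτ a ha b hb h).le]
    · rw [h, min_self, min_self]
    · rw [min_eq_right h.le, min_eq_right (hSτ b hb a ha h).le]
  have hmaxD : ∀ a b : Fin n, a ∉ Sτ → b ∉ Sτ → τ (max a b) = min (τ a) (τ b) := by
    intro a b ha hb
    rcases lt_trichotomy a b with h | h | h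
    · rw [max_eq_right h.le, min_eq_right (hDτ a ha b hb h).le]
    · rw [h, max_self, min_self]
    · rw [max_eq_left h.le, min_eq_left (hDτ b hb a ha h).le]
  have hminD : ∀ a b : Fin n, a ∉ Sτ → b ∉ Sτ → τ (min a b) = max (τ a) (τ b) := by
    intro a b ha hb
    rcases lt_trichotomy a b with h | h | h
    · rw [min_eq_left h.le, max_eq_left (hDτ a ha b hb h).le]
    · rw [h, min_self, max_self]
    · rw [min_eq_right h.le, max_eq_right (hDτ b hb a ha h).le]
  -- τ ∘ f as value min/max
  have hfvN : ∀ x : Fin k, (TypeNE π x ∨ TypeNW π x) →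
      τ (f x) = max (τ (e₁ x)) (τ (e₂ x)) := by
    intro x hx
    rcases hx with hx | hx
    · rw [(hf x).2 (Or.inl hx)]
      exact hmaxS _ _ (mem_of_ne' hSτ hDτ ((ht₁ x).1 hx)).1
        (mem_of_ne' hSτ hDτ ((ht₂ x).1 hx)).1
    · rw [(hf x).1 (Or.inr hx)]
      exact hminD _ _ (mem_of_nw' hSτ hDτ ((ht₁ x).2.1 hx)).1
        (mem_of_nw' hSτ hDτ ((ht₂ x).2.1 hx)).1
  have hfvS : ∀ x : Fin k, (TypeSW π x ∨ TypeSE π x) →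
      τ (f x) = min (τ (e₁ x)) (τ (e₂ x)) := by
    intro x hx
    rcases hx with hx | hx
    · rw [(hf x).1 (Or.inl hx)]
      exact hminS _ _ (mem_of_sw' hSτ hDτ ((ht₁ x).2.2.1 hx)).1
        (mem_of_sw' hSτ hDτ ((ht₂ x).2.2.1 hx)).1
    · rw [(hf x).2 (Or.inr hx)]
      exact hmaxD _ _ (mem_of_se' hSτ hDτ ((ht₁ x).2.2.2 hx)).1
        (mem_of_se' hSτ hDτ ((ht₂ x).2.2.2 hx)).1
  -- value preservation, forward direction
  have hval : ∀ i j : Fin k, π i < π j → τ (f i) < τ (f j) := by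
    intro i j hij
    by_cases hiN : TypeNE π i ∨ TypeNW π i
    · rw [hfvN i hiN]
      by_cases hjN : TypeNE π j ∨ TypeNW π j
      · rw [hfvN j hjN]
        exact max_lt_max ((he₁.2 i j).mp hij) ((he₂.2 i j).mp hij)
      · have hjS : TypeSW π j ∨ TypeSE π j := by have := hsome j; tauto
        exact absurd hij (fun h => north_south hπ hiN hjS h)
    · have hiS : TypeSW π i ∨ TypeSE π i := by have := hsome i; tauto
      rw [hfvS i hiS]
      by_cases hjN : TypeNE π j ∨ TypeNW π j
      · rw [hfvN j hjN]
        exact lt_of_le_of_lt (min_le_left _ _)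
          (lt_of_lt_of_le ((he₁.2 i j).mp hij) (le_max_left _ _))
      · have hjS : TypeSW π j ∨ TypeSE π j := by have := hsome j; tauto
        rw [hfvS j hjS]
        exact min_lt_min ((he₁.2 i j).mp hij) ((he₂.2 i j).mp hij)
  refine ⟨hmono, fun i j => ⟨hval i j, fun h => ?_⟩⟩
  rcases lt_trichotomy (π i) (π j) with h' | h' | h'
  · exact h'
  · have : i = j := π.injective h'
    subst this
    exact absurd h (lt_irrefl _)
  · exact absurd (hval j i h') (asymm h)
end

section
/- Let π and τ be skew-merged permutations, let e be a type-preserving embedding of the non-central positions of π into τ (an injective map from non-central positions of π to positions of τ with x < y implying e x < e y, with π x < π y ↔ τ (e x) < τ (e y), and mapping each position to a position of the same type), and let f be a type-preserving map from the non-central positions of π to positions of τ such that f(x) ⊴ e(x) for every non-central position x. Then for every non-central position x of π: (i) if x^{oh} is defined and (f(x^{oh}))^{ih}_{T(x)} is defined, then (f(x^{oh}))^{ih}_{T(x)} ⊴ e(x); and (ii) if x^{ov} is defined and (f(x^{ov}))^{iv}_{T(x)} is defined, then (f(x^{ov}))^{iv}_{T(x)} ⊴ e(x). -/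
/-- The four corner types of a skew-merged permutation. -/
inductive SMType : Type
  | NE | NW | SW | SE

/-- `x` has type `T` in `τ`. -/
def HasType {n : ℕ} (τ : Equiv.Perm (Fin n)) (x : Fin n) : SMType → Prop
  | SMType.NE => TypeNE τ x
  | SMType.NW => TypeNW τ x
  | SMType.SW => TypeSW τ x
  | SMType.SE => TypeSE τ x

/-- `x` is a non-central position of `τ`. -/
def NonCentral {n : ℕ} (τ : Equiv.Perm (Fin n)) (x : Fin n) : Prop :=
  TypeNE τ x ∨ TypeNW τ x ∨ TypeSW τ x ∨ TypeSE τ x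

/-- The outward order `⊴` on positions of a common type `T`: for West types (NW, SW)
further out means further left, so `p ⊴ q ↔ p ≤ q`; for East types (NE, SE) further out
means further right, so `p ⊴ q ↔ q ≤ p`. -/
def OutLE {n : ℕ} : SMType → Fin n → Fin n → Prop
  | SMType.NW, p, q => p ≤ q
  | SMType.SW, p, q => p ≤ q
  | SMType.NE, p, q => q ≤ p
  | SMType.SE, p, q => q ≤ p

/-- `y = x^{oh}`, the next non-central position outward from the centre in the
horizontal direction, relative to the type `T` of `x`: for West types it is the largest
non-central position `< x`, for East types the smallest non-central position `> x`. -/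
def IsOH {k : ℕ} (π : Equiv.Perm (Fin k)) : SMType → Fin k → Fin k → Prop
  | SMType.NW, x, y => NonCentral π y ∧ y < x ∧ ∀ z, NonCentral π z → z < x → z ≤ y
  | SMType.SW, x, y => NonCentral π y ∧ y < x ∧ ∀ z, NonCentral π z → z < x → z ≤ y
  | SMType.NE, x, y => NonCentral π y ∧ x < y ∧ ∀ z, NonCentral π z → x < z → y ≤ z
  | SMType.SE, x, y => NonCentral π y ∧ x < y ∧ ∀ z, NonCentral π z → x < z → y ≤ z

/-- `y = x^{ov}`, the next non-central position outward from the centre in the vertical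
direction, relative to the type `T` of `x`: for North types it is the non-central
position of least value above `π x`, for South types the non-central position of
greatest value below `π x`. -/
def IsOV {k : ℕ} (π : Equiv.Perm (Fin k)) : SMType → Fin k → Fin k → Prop
  | SMType.NW, x, y => NonCentral π y ∧ π x < π y ∧ ∀ z, NonCentral π z → π x < π z → π y ≤ π z
  | SMType.NE, x, y => NonCentral π y ∧ π x < π y ∧ ∀ z, NonCentral π z → π x < π z → π y ≤ π z
  | SMType.SW, x, y => NonCentral π y ∧ π y < π x ∧ ∀ z, NonCentral π z → π z < π x → π z ≤ π y
  | SMType.SE, x, y => NonCentral π y ∧ π y < π x ∧ ∀ z, NonCentral π z → π z < π x → π z ≤ π y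

/-- `q = p^{ih}_T`, the next type-`T` position inward from `p` in the horizontal
direction: for West types the leftmost type-`T` position `> p`, for East types the
rightmost type-`T` position `< p`. -/
def IsIH {n : ℕ} (τ : Equiv.Perm (Fin n)) : SMType → Fin n → Fin n → Prop
  | SMType.NW, p, q => HasType τ q SMType.NW ∧ p < q ∧ ∀ r, HasType τ r SMType.NW → p < r → q ≤ r
  | SMType.SW, p, q => HasType τ q SMType.SW ∧ p < q ∧ ∀ r, HasType τ r SMType.SW → p < r → q ≤ r
  | SMType.NE, p, q => HasType τ q SMType.NE ∧ q < p ∧ ∀ r, HasType τ r SMType.NE → r < p → r ≤ q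
  | SMType.SE, p, q => HasType τ q SMType.SE ∧ q < p ∧ ∀ r, HasType τ r SMType.SE → r < p → r ≤ q

/-- `q = p^{iv}_T`, the next type-`T` position inward from `p` in the vertical
direction: for North types the type-`T` position of greatest value below `τ p`, for
South types the type-`T` position of least value above `τ p`. -/
def IsIV {n : ℕ} (τ : Equiv.Perm (Fin n)) : SMType → Fin n → Fin n → Prop
  | SMType.NW, p, q => HasType τ q SMType.NW ∧ τ q < τ p ∧
      ∀ r, HasType τ r SMType.NW → τ r < τ p → τ r ≤ τ q
  | SMType.NE, p, q => HasType τ q SMType.NE ∧ τ q < τ p ∧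
      ∀ r, HasType τ r SMType.NE → τ r < τ p → τ r ≤ τ q
  | SMType.SW, p, q => HasType τ q SMType.SW ∧ τ p < τ q ∧
      ∀ r, HasType τ r SMType.SW → τ p < τ r → τ q ≤ τ r
  | SMType.SE, p, q => HasType τ q SMType.SE ∧ τ p < τ q ∧
      ∀ r, HasType τ r SMType.SE → τ p < τ r → τ q ≤ τ r

section Aux

variable {n : ℕ} {σ : Equiv.Perm (Fin n)} {S : Set (Fin n)}

/-- An NE position lies on the increasing part. -/
lemma aux_mem_NE (hS : ∀ i ∈ S, ∀ j ∈ S, i < j → σ i < σ j)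
    (hD : ∀ i ∉ S, ∀ j ∉ S, i < j → σ j < σ i)
    {r : Fin n} (h : TypeNE σ r) : r ∈ S := by
  obtain ⟨j, k, hjk, hkr, h1, h2⟩ := h
  by_contra hr
  by_cases hj : j ∈ S
  · by_cases hk : k ∈ S
    · exact absurd (hS j hj k hk hjk) (not_lt.2 h1.le)
    · exact absurd (hD k hk r hr hkr) (not_lt.2 (h1.trans h2).le)
  · exact absurd (hD j hj r hr (hjk.trans hkr)) (not_lt.2 h2.le)

/-- An SW position lies on the increasing part. -/
lemma aux_mem_SW (hS : ∀ i ∈ S, ∀ j ∈ S, i < j → σ i < σ j)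
    (hD : ∀ i ∉ S, ∀ j ∉ S, i < j → σ j < σ i)
    {r : Fin n} (h : TypeSW σ r) : r ∈ S := by
  obtain ⟨j, k, hrj, hjk, h1, h2⟩ := h
  by_contra hr
  by_cases hj : j ∈ S
  · by_cases hk : k ∈ S
    · exact absurd (hS j hj k hk hjk) (not_lt.2 h2.le)
    · exact absurd (hD r hr k hk (hrj.trans hjk)) (not_lt.2 h1.le)
  · exact absurd (hD r hr j hj hrj) (not_lt.2 (h1.trans h2).le)

/-- An NW position lies on the decreasing part. -/
lemma aux_mem_NW (hS : ∀ i ∈ S, ∀ j ∈ S, i < j → σ i < σ j)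
    (hD : ∀ i ∉ S, ∀ j ∉ S, i < j → σ j < σ i)
    {r : Fin n} (h : TypeNW σ r) : r ∉ S := by
  obtain ⟨j, k, hrj, hjk, h1, h2⟩ := h
  intro hr
  by_cases hj : j ∈ S
  · exact absurd (hS r hr j hj hrj) (not_lt.2 (h1.trans h2).le)
  · by_cases hk : k ∈ S
    · exact absurd (hS r hr k hk (hrj.trans hjk)) (not_lt.2 h2.le)
    · exact absurd (hD j hj k hk hjk) (not_lt.2 h1.le)

/-- An SE position lies on the decreasing part. -/
lemma aux_mem_SE (hS : ∀ i ∈ S, ∀ j ∈ S, i < j → σ i < σ j)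
    (hD : ∀ i ∉ S, ∀ j ∉ S, i < j → σ j < σ i)
    {r : Fin n} (h : TypeSE σ r) : r ∉ S := by
  obtain ⟨j, k, hjk, hkr, h1, h2⟩ := h
  intro hr
  by_cases hj : j ∈ S
  · exact absurd (hS j hj r hr (hjk.trans hkr)) (not_lt.2 h1.le)
  · by_cases hk : k ∈ S
    · exact absurd (hS k hk r hr hkr) (not_lt.2 (h1.trans h2).le)
    · exact absurd (hD j hj k hk hjk) (not_lt.2 h2.le)

/-- An NE position has a witness on the decreasing part, to its left and below. -/
lemma aux_wit_NE (hS : ∀ i ∈ S, ∀ j ∈ S, i < j → σ i < σ j)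
    {r : Fin n} (h : TypeNE σ r) : ∃ a, a ∉ S ∧ a < r ∧ σ a < σ r := by
  obtain ⟨j, k, hjk, hkr, h1, h2⟩ := h
  by_cases hj : j ∈ S
  · by_cases hk : k ∈ S
    · exact absurd (hS j hj k hk hjk) (not_lt.2 h1.le)
    · exact ⟨k, hk, hkr, h1.trans h2⟩
  · exact ⟨j, hj, hjk.trans hkr, h2⟩

/-- An SW position has a witness on the decreasing part, to its right and above. -/
lemma aux_wit_SW (hS : ∀ i ∈ S, ∀ j ∈ S, i < j → σ i < σ j)
    {r : Fin n} (h : TypeSW σ r) : ∃ a, a ∉ S ∧ r < a ∧ σ r < σ a := by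
  obtain ⟨j, k, hrj, hjk, h1, h2⟩ := h
  by_cases hj : j ∈ S
  · by_cases hk : k ∈ S
    · exact absurd (hS j hj k hk hjk) (not_lt.2 h2.le)
    · exact ⟨k, hk, hrj.trans hjk, h1⟩
  · exact ⟨j, hj, hrj, h1.trans h2⟩

/-- An NW position has a witness on the increasing part, to its right and below. -/
lemma aux_wit_NW (hD : ∀ i ∉ S, ∀ j ∉ S, i < j → σ j < σ i)
    {r : Fin n} (h : TypeNW σ r) : ∃ a, a ∈ S ∧ r < a ∧ σ a < σ r := by
  obtain ⟨j, k, hrj, hjk, h1, h2⟩ := h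
  by_cases hj : j ∈ S
  · exact ⟨j, hj, hrj, h1.trans h2⟩
  · by_cases hk : k ∈ S
    · exact ⟨k, hk, hrj.trans hjk, h2⟩
    · exact absurd (hD j hj k hk hjk) (not_lt.2 h1.le)

/-- An SE position has a witness on the increasing part, to its left and above. -/
lemma aux_wit_SE (hD : ∀ i ∉ S, ∀ j ∉ S, i < j → σ j < σ i)
    {r : Fin n} (h : TypeSE σ r) : ∃ a, a ∈ S ∧ a < r ∧ σ r < σ a := by
  obtain ⟨j, k, hjk, hkr, h1, h2⟩ := h
  by_cases hj : j ∈ S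
  · exact ⟨j, hj, hjk.trans hkr, h1⟩
  · by_cases hk : k ∈ S
    · exact ⟨k, hk, hkr, h1.trans h2⟩
    · exact absurd (hD j hj k hk hjk) (not_lt.2 h2.le)

/-- No East-type position lies strictly left of a West-type position. -/
lemma aux_east_west (hS : ∀ i ∈ S, ∀ j ∈ S, i < j → σ i < σ j)
    (hD : ∀ i ∉ S, ∀ j ∉ S, i < j → σ j < σ i)
    {r p : Fin n} (hr : TypeNE σ r ∨ TypeSE σ r)
    (hp : TypeNW σ p ∨ TypeSW σ p) (hrp : r < p) : False := by
  rcases hr with hr | hr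
  · have hrS : r ∈ S := aux_mem_NE hS hD hr
    obtain ⟨a, haS, har, hav⟩ := aux_wit_NE hS hr
    rcases hp with hp | hp
    · have hpS : p ∉ S := aux_mem_NW hS hD hp
      obtain ⟨b, hbS, hpb, hbv⟩ := aux_wit_NW hD hp
      have h1 : σ p < σ a := hD a haS p hpS (har.trans hrp)
      have h2 : σ r < σ b := hS r hrS b hbS (hrp.trans hpb)
      exact absurd (h2.trans (hbv.trans (h1.trans hav))) (lt_irrefl _)
    · have hpS : p ∈ S := aux_mem_SW hS hD hp
      obtain ⟨b, hbS, hpb, hbv⟩ := aux_wit_SW hS hp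
      have h1 : σ b < σ a := hD a haS b hbS (har.trans (hrp.trans hpb))
      have h2 : σ r < σ p := hS r hrS p hpS hrp
      exact absurd (hbv.trans (h1.trans (hav.trans h2))) (lt_irrefl _)
  · have hrS : r ∉ S := aux_mem_SE hS hD hr
    obtain ⟨a, haS, har, hav⟩ := aux_wit_SE hD hr
    rcases hp with hp | hp
    · have hpS : p ∉ S := aux_mem_NW hS hD hp
      obtain ⟨b, hbS, hpb, hbv⟩ := aux_wit_NW hD hp
      have h1 : σ a < σ b := hS a haS b hbS (har.trans (hrp.trans hpb))
      have h2 : σ p < σ r := hD r hrS p hpS hrp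
      exact absurd (hav.trans (h1.trans (hbv.trans h2))) (lt_irrefl _)
    · have hpS : p ∈ S := aux_mem_SW hS hD hp
      obtain ⟨b, hbS, hpb, hbv⟩ := aux_wit_SW hS hp
      have h1 : σ a < σ p := hS a haS p hpS (har.trans hrp)
      have h2 : σ b < σ r := hD r hrS b hbS (hrp.trans hpb)
      exact absurd (hav.trans (h1.trans (hbv.trans h2))) (lt_irrefl _)

/-- No North-type position has value strictly below a South-type position. -/
lemma aux_north_south (hS : ∀ i ∈ S, ∀ j ∈ S, i < j → σ i < σ j)
    (hD : ∀ i ∉ S, ∀ j ∉ S, i < j → σ j < σ i)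
    {p r : Fin n} (hp : TypeNW σ p ∨ TypeNE σ p)
    (hr : TypeSW σ r ∨ TypeSE σ r) (hpr : σ p < σ r) : False := by
  rcases hp with hp | hp
  · have hpS : p ∉ S := aux_mem_NW hS hD hp
    obtain ⟨a, haS, hpa, hav⟩ := aux_wit_NW hD hp
    rcases hr with hr | hr
    · have hrS : r ∈ S := aux_mem_SW hS hD hr
      obtain ⟨c, hcS, hrc, hcv⟩ := aux_wit_SW hS hr
      have har : a < r := by
        rcases lt_trichotomy a r with h | h | h
        · exact h
        · exact absurd hpr (not_lt.2 (h ▸ hav.le))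
        · exact absurd (hS r hrS a haS h) (not_lt.2 (hav.trans hpr).le)
      have h1 : σ c < σ p := hD p hpS c hcS (hpa.trans (har.trans hrc))
      exact absurd (hpr.trans (hcv.trans h1)) (lt_irrefl _)
    · have hrS : r ∉ S := aux_mem_SE hS hD hr
      obtain ⟨b, hbS, hbr, hbv⟩ := aux_wit_SE hD hr
      have hrp : r < p := by
        rcases lt_trichotomy r p with h | h | h
        · exact h
        · exact absurd hpr (h ▸ lt_irrefl _)
        · exact absurd (hD p hpS r hrS h) (not_lt.2 hpr.le)
      have h1 : σ b < σ a := hS b hbS a haS (hbr.trans (hrp.trans hpa))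
      exact absurd (hbv.trans (h1.trans (hav.trans hpr))) (lt_irrefl _)
  · have hpS : p ∈ S := aux_mem_NE hS hD hp
    obtain ⟨a, haS, hap, hav⟩ := aux_wit_NE hS hp
    rcases hr with hr | hr
    · have hrS : r ∈ S := aux_mem_SW hS hD hr
      obtain ⟨c, hcS, hrc, hcv⟩ := aux_wit_SW hS hr
      have hprlt : p < r := by
        rcases lt_trichotomy p r with h | h | h
        · exact h
        · exact absurd hpr (h ▸ lt_irrefl _)
        · exact absurd (hS r hrS p hpS h) (not_lt.2 hpr.le)
      have h1 : σ c < σ a := hD a haS c hcS (hap.trans (hprlt.trans hrc))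
      exact absurd (hav.trans (hpr.trans (hcv.trans h1))) (lt_irrefl _)
    · have hrS : r ∉ S := aux_mem_SE hS hD hr
      obtain ⟨b, hbS, hbr, hbv⟩ := aux_wit_SE hD hr
      have hpb : p ≤ b := by
        by_contra hc
        exact absurd ((hS b hbS p hpS (lt_of_not_ge hc)).trans hpr) (not_lt.2 hbv.le)
      have har : a < r := lt_of_le_of_lt (hap.le.trans hpb) hbr
      exact absurd ((hD a haS r hrS har).trans (hav.trans hpr)) (lt_irrefl _)

/-- NE positions are increasing. -/
lemma aux_lt_NE (hS : ∀ i ∈ S, ∀ j ∈ S, i < j → σ i < σ j)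
    (hD : ∀ i ∉ S, ∀ j ∉ S, i < j → σ j < σ i)
    {p q : Fin n} (hp : TypeNE σ p) (hq : TypeNE σ q) (h : p < q) : σ p < σ q :=
  hS p (aux_mem_NE hS hD hp) q (aux_mem_NE hS hD hq) h

/-- SW positions are increasing. -/
lemma aux_lt_SW (hS : ∀ i ∈ S, ∀ j ∈ S, i < j → σ i < σ j)
    (hD : ∀ i ∉ S, ∀ j ∉ S, i < j → σ j < σ i)
    {p q : Fin n} (hp : TypeSW σ p) (hq : TypeSW σ q) (h : p < q) : σ p < σ q :=
  hS p (aux_mem_SW hS hD hp) q (aux_mem_SW hS hD hq) h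

/-- NW positions are decreasing. -/
lemma aux_lt_NW (hS : ∀ i ∈ S, ∀ j ∈ S, i < j → σ i < σ j)
    (hD : ∀ i ∉ S, ∀ j ∉ S, i < j → σ j < σ i)
    {p q : Fin n} (hp : TypeNW σ p) (hq : TypeNW σ q) (h : p < q) : σ q < σ p :=
  hD p (aux_mem_NW hS hD hp) q (aux_mem_NW hS hD hq) h

/-- SE positions are decreasing. -/
lemma aux_lt_SE (hS : ∀ i ∈ S, ∀ j ∈ S, i < j → σ i < σ j)
    (hD : ∀ i ∉ S, ∀ j ∉ S, i < j → σ j < σ i)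
    {p q : Fin n} (hp : TypeSE σ p) (hq : TypeSE σ q) (h : p < q) : σ q < σ p :=
  hD p (aux_mem_SE hS hD hp) q (aux_mem_SE hS hD hq) h

lemma aux_le_NE (hS : ∀ i ∈ S, ∀ j ∈ S, i < j → σ i < σ j)
    (hD : ∀ i ∉ S, ∀ j ∉ S, i < j → σ j < σ i)
    {p q : Fin n} (hp : TypeNE σ p) (hq : TypeNE σ q) (h : p ≤ q) : σ p ≤ σ q := by
  rcases h.eq_or_lt with h | h
  · exact le_of_eq (by rw [h])
  · exact (aux_lt_NE hS hD hp hq h).le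

lemma aux_le_SW (hS : ∀ i ∈ S, ∀ j ∈ S, i < j → σ i < σ j)
    (hD : ∀ i ∉ S, ∀ j ∉ S, i < j → σ j < σ i)
    {p q : Fin n} (hp : TypeSW σ p) (hq : TypeSW σ q) (h : p ≤ q) : σ p ≤ σ q := by
  rcases h.eq_or_lt with h | h
  · exact le_of_eq (by rw [h])
  · exact (aux_lt_SW hS hD hp hq h).le

lemma aux_le_NW (hS : ∀ i ∈ S, ∀ j ∈ S, i < j → σ i < σ j)
    (hD : ∀ i ∉ S, ∀ j ∉ S, i < j → σ j < σ i)
    {p q : Fin n} (hp : TypeNW σ p) (hq : TypeNW σ q) (h : p ≤ q) : σ q ≤ σ p := by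
  rcases h.eq_or_lt with h | h
  · exact le_of_eq (by rw [h])
  · exact (aux_lt_NW hS hD hp hq h).le

lemma aux_le_SE (hS : ∀ i ∈ S, ∀ j ∈ S, i < j → σ i < σ j)
    (hD : ∀ i ∉ S, ∀ j ∉ S, i < j → σ j < σ i)
    {p q : Fin n} (hp : TypeSE σ p) (hq : TypeSE σ q) (h : p ≤ q) : σ q ≤ σ p := by
  rcases h.eq_or_lt with h | h
  · exact le_of_eq (by rw [h])
  · exact (aux_lt_SE hS hD hp hq h).le

end Aux

/-- skew-merged analogue of Proposition `prop-allowed-update`: if `e` is a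
type-preserving embedding of the non-central positions of `π` into `τ`, and `f` is a
type-preserving map of the non-central positions of `π` into `τ` with `f x ⊴ e x` for
all non-central `x`, then for every non-central `x` of type `T`:
(i) whenever `y = x^{oh}` and `q = (f y)^{ih}_T` exist, `q ⊴ e x`; and
(ii) whenever `y = x^{ov}` and `q = (f y)^{iv}_T` exist, `q ⊴ e x`. -/
theorem statement17 {k n : ℕ} (π : Equiv.Perm (Fin k)) (τ : Equiv.Perm (Fin n))
    (hπ : SkewMerged π) (hτ : SkewMerged τ)
    (e : Fin k → Fin n)
    (he_inj : ∀ x y : Fin k, NonCentral π x → NonCentral π y → e x = e y → x = y)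
    (he_mono : ∀ x y : Fin k, NonCentral π x → NonCentral π y → x < y → e x < e y)
    (he_val : ∀ x y : Fin k, NonCentral π x → NonCentral π y →
      (π x < π y ↔ τ (e x) < τ (e y)))
    (he_type : ∀ (x : Fin k) (T : SMType), NonCentral π x → HasType π x T →
      HasType τ (e x) T)
    (f : Fin k → Fin n)
    (hf_type : ∀ (x : Fin k) (T : SMType), NonCentral π x → HasType π x T →
      HasType τ (f x) T)
    (hfe : ∀ (x : Fin k) (T : SMType), NonCentral π x → HasType π x T →
      OutLE T (f x) (e x)) :
    ∀ (x : Fin k) (T : SMType), NonCentral π x → HasType π x T →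
      (∀ y : Fin k, IsOH π T x y →
        ∀ q : Fin n, IsIH τ T (f y) q → OutLE T q (e x)) ∧
      (∀ y : Fin k, IsOV π T x y →
        ∀ q : Fin n, IsIV τ T (f y) q → OutLE T q (e x)) := by
  obtain ⟨Sp, hSp, hDp⟩ := hπ
  obtain ⟨St, hSt, hDt⟩ := hτ
  intro x T hx hxT
  cases T with
  | NW =>
    refine ⟨fun y hy q hq => ?_, fun y hy q hq => ?_⟩
    · obtain ⟨hyNC, hyx, -⟩ := hy
      obtain ⟨hqT, hlt, hmin⟩ := hq
      have hfy : f y < e x := by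
        rcases id hyNC with h | h | h | h
        · exact (aux_east_west hSp hDp (Or.inl h) (Or.inl hxT) hyx).elim
        · exact lt_of_le_of_lt (hfe y SMType.NW hyNC h) (he_mono y x hyNC hx hyx)
        · exact lt_of_le_of_lt (hfe y SMType.SW hyNC h) (he_mono y x hyNC hx hyx)
        · exact (aux_east_west hSp hDp (Or.inr h) (Or.inl hxT) hyx).elim
      exact hmin (e x) (he_type x SMType.NW hx hxT) hfy
    · obtain ⟨hyNC, hxy, -⟩ := hy
      obtain ⟨hqT, hlt, hmax⟩ := hq
      have h1 : τ (e x) < τ (e y) := (he_val x y hx hyNC).1 hxy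
      have h2 : τ (e y) ≤ τ (f y) := by
        rcases id hyNC with h | h | h | h
        · exact aux_le_NE hSt hDt (he_type y SMType.NE hyNC h)
            (hf_type y SMType.NE hyNC h) (hfe y SMType.NE hyNC h)
        · exact aux_le_NW hSt hDt (hf_type y SMType.NW hyNC h)
            (he_type y SMType.NW hyNC h) (hfe y SMType.NW hyNC h)
        · exact (aux_north_south hSp hDp (Or.inl hxT) (Or.inl h) hxy).elim
        · exact (aux_north_south hSp hDp (Or.inl hxT) (Or.inr h) hxy).elim
      have h3 : τ (e x) ≤ τ q := hmax (e x) (he_type x SMType.NW hx hxT) (h1.trans_le h2)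
      by_contra hcon
      exact absurd h3 (not_le.2 (aux_lt_NW hSt hDt (he_type x SMType.NW hx hxT) hqT
        (lt_of_not_ge hcon)))
  | SW =>
    refine ⟨fun y hy q hq => ?_, fun y hy q hq => ?_⟩
    · obtain ⟨hyNC, hyx, -⟩ := hy
      obtain ⟨hqT, hlt, hmin⟩ := hq
      have hfy : f y < e x := by
        rcases id hyNC with h | h | h | h
        · exact (aux_east_west hSp hDp (Or.inl h) (Or.inr hxT) hyx).elim
        · exact lt_of_le_of_lt (hfe y SMType.NW hyNC h) (he_mono y x hyNC hx hyx)
        · exact lt_of_le_of_lt (hfe y SMType.SW hyNC h) (he_mono y x hyNC hx hyx)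
        · exact (aux_east_west hSp hDp (Or.inr h) (Or.inr hxT) hyx).elim
      exact hmin (e x) (he_type x SMType.SW hx hxT) hfy
    · obtain ⟨hyNC, hxy, -⟩ := hy
      obtain ⟨hqT, hlt, hmin⟩ := hq
      have h1 : τ (e y) < τ (e x) := (he_val y x hyNC hx).1 hxy
      have h2 : τ (f y) ≤ τ (e y) := by
        rcases id hyNC with h | h | h | h
        · exact (aux_north_south hSp hDp (Or.inr h) (Or.inl hxT) hxy).elim
        · exact (aux_north_south hSp hDp (Or.inl h) (Or.inl hxT) hxy).elim
        · exact aux_le_SW hSt hDt (hf_type y SMType.SW hyNC h)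
            (he_type y SMType.SW hyNC h) (hfe y SMType.SW hyNC h)
        · exact aux_le_SE hSt hDt (he_type y SMType.SE hyNC h)
            (hf_type y SMType.SE hyNC h) (hfe y SMType.SE hyNC h)
      have h3 : τ q ≤ τ (e x) := hmin (e x) (he_type x SMType.SW hx hxT) (h2.trans_lt h1)
      by_contra hcon
      exact absurd h3 (not_le.2 (aux_lt_SW hSt hDt (he_type x SMType.SW hx hxT) hqT
        (lt_of_not_ge hcon)))
  | NE =>
    refine ⟨fun y hy q hq => ?_, fun y hy q hq => ?_⟩
    · obtain ⟨hyNC, hxy, -⟩ := hy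
      obtain ⟨hqT, hlt, hmax⟩ := hq
      have hfy : e x < f y := by
        rcases id hyNC with h | h | h | h
        · exact lt_of_lt_of_le (he_mono x y hx hyNC hxy) (hfe y SMType.NE hyNC h)
        · exact (aux_east_west hSp hDp (Or.inl hxT) (Or.inl h) hxy).elim
        · exact (aux_east_west hSp hDp (Or.inl hxT) (Or.inr h) hxy).elim
        · exact lt_of_lt_of_le (he_mono x y hx hyNC hxy) (hfe y SMType.SE hyNC h)
      exact hmax (e x) (he_type x SMType.NE hx hxT) hfy
    · obtain ⟨hyNC, hxy, -⟩ := hy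
      obtain ⟨hqT, hlt, hmax⟩ := hq
      have h1 : τ (e x) < τ (e y) := (he_val x y hx hyNC).1 hxy
      have h2 : τ (e y) ≤ τ (f y) := by
        rcases id hyNC with h | h | h | h
        · exact aux_le_NE hSt hDt (he_type y SMType.NE hyNC h)
            (hf_type y SMType.NE hyNC h) (hfe y SMType.NE hyNC h)
        · exact aux_le_NW hSt hDt (hf_type y SMType.NW hyNC h)
            (he_type y SMType.NW hyNC h) (hfe y SMType.NW hyNC h)
        · exact (aux_north_south hSp hDp (Or.inr hxT) (Or.inl h) hxy).elim
        · exact (aux_north_south hSp hDp (Or.inr hxT) (Or.inr h) hxy).elim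
      have h3 : τ (e x) ≤ τ q := hmax (e x) (he_type x SMType.NE hx hxT) (h1.trans_le h2)
      by_contra hcon
      exact absurd h3 (not_le.2 (aux_lt_NE hSt hDt hqT (he_type x SMType.NE hx hxT)
        (lt_of_not_ge hcon)))
  | SE =>
    refine ⟨fun y hy q hq => ?_, fun y hy q hq => ?_⟩
    · obtain ⟨hyNC, hxy, -⟩ := hy
      obtain ⟨hqT, hlt, hmax⟩ := hq
      have hfy : e x < f y := by
        rcases id hyNC with h | h | h | h
        · exact lt_of_lt_of_le (he_mono x y hx hyNC hxy) (hfe y SMType.NE hyNC h)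
        · exact (aux_east_west hSp hDp (Or.inr hxT) (Or.inl h) hxy).elim
        · exact (aux_east_west hSp hDp (Or.inr hxT) (Or.inr h) hxy).elim
        · exact lt_of_lt_of_le (he_mono x y hx hyNC hxy) (hfe y SMType.SE hyNC h)
      exact hmax (e x) (he_type x SMType.SE hx hxT) hfy
    · obtain ⟨hyNC, hxy, -⟩ := hy
      obtain ⟨hqT, hlt, hmin⟩ := hq
      have h1 : τ (e y) < τ (e x) := (he_val y x hyNC hx).1 hxy
      have h2 : τ (f y) ≤ τ (e y) := by
        rcases id hyNC with h | h | h | h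
        · exact (aux_north_south hSp hDp (Or.inr h) (Or.inr hxT) hxy).elim
        · exact (aux_north_south hSp hDp (Or.inl h) (Or.inr hxT) hxy).elim
        · exact aux_le_SW hSt hDt (hf_type y SMType.SW hyNC h)
            (he_type y SMType.SW hyNC h) (hfe y SMType.SW hyNC h)
        · exact aux_le_SE hSt hDt (he_type y SMType.SE hyNC h)
            (hf_type y SMType.SE hyNC h) (hfe y SMType.SE hyNC h)
      have h3 : τ q ≤ τ (e x) := hmin (e x) (he_type x SMType.SE hx hxT) (h2.trans_lt h1)
      by_contra hcon
      exact absurd h3 (not_le.2 (aux_lt_SE hSt hDt hqT (he_type x SMType.SE hx hxT)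
        (lt_of_not_ge hcon)))
end

section
/- Let τ be a skew-merged permutation of size n and let S be a set of positions on which τ is strictly increasing (i < j in S implies τ i < τ j). Then S contains at most one position whose type is NW or SE. -/
/-- a set of positions of a skew-merged permutation on which `τ` is
strictly increasing contains at most one position of type NW or SE. -/
theorem statement18 {n : ℕ} (τ : Equiv.Perm (Fin n)) (hτ : SkewMerged τ)
    (S : Set (Fin n)) (hS : ∀ i ∈ S, ∀ j ∈ S, i < j → τ i < τ j) :
    ∀ x ∈ S, ∀ y ∈ S,
      (TypeNW τ x ∨ TypeSE τ x) → (TypeNW τ y ∨ TypeSE τ y) → x = y := by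
  obtain ⟨M, hM, hD⟩ := hτ
  have key : ∀ x : Fin n, (TypeNW τ x ∨ TypeSE τ x) → x ∉ M := by
    rintro x (⟨j, k, hxj, hjk, hv1, hv2⟩ | ⟨j, k, hjk, hkx, hv1, hv2⟩) hxM
    · by_cases hjM : j ∈ M
      · exact absurd (hM x hxM j hjM hxj) (not_lt.mpr (hv1.trans hv2).le)
      · by_cases hkM : k ∈ M
        · exact absurd (hM x hxM k hkM (hxj.trans hjk)) (not_lt.mpr hv2.le)
        · exact absurd (hD j hjM k hkM hjk) (not_lt.mpr hv1.le)
    · by_cases hjM : j ∈ M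
      · exact absurd (hM j hjM x hxM (hjk.trans hkx)) (not_lt.mpr hv1.le)
      · by_cases hkM : k ∈ M
        · exact absurd (hM k hkM x hxM hkx) (not_lt.mpr (hv1.trans hv2).le)
        · exact absurd (hD j hjM k hkM hjk) (not_lt.mpr hv2.le)
  intro x hxS y hyS hx hy
  rcases lt_trichotomy x y with h | h | h
  · exact absurd (hS x hxS y hyS h) (not_lt.mpr (hD x (key x hx) y (key y hy) h).le)
  · exact h
  · exact absurd (hS y hyS x hxS h) (not_lt.mpr (hD y (key y hy) x (key x hx) h).le)
end

section
/- Let τ be a skew-merged permutation of size n. Then the maximum cardinality of a set of positions on which τ is strictly increasing equals the number of positions of type SW, plus the number of positions of type NE, plus the maximum cardinality of a set of central positions on which τ is strictly increasing. -/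
section Helpers
variable {n : ℕ} {τ : Equiv.Perm (Fin n)} {S : Set (Fin n)}

variable {n : ℕ} {τ : Equiv.Perm (Fin n)} {S : Set (Fin n)}

lemma sm_sw_mem (hinc : ∀ i ∈ S, ∀ j ∈ S, i < j → τ i < τ j)
    (hdec : ∀ i ∉ S, ∀ j ∉ S, i < j → τ j < τ i)
    {x : Fin n} (h : TypeSW τ x) : x ∈ S := by
  obtain ⟨j, k, h1, h2, h3, h4⟩ := h
  by_contra hx
  have hj : j ∈ S := by
    by_contra hj
    exact absurd (hdec x hx j hj h1) (asymm (h3.trans h4))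
  have hk : k ∈ S := by
    by_contra hk
    exact absurd (hdec x hx k hk (h1.trans h2)) (asymm h3)
  exact absurd (hinc j hj k hk h2) (asymm h4)

lemma sm_ne_mem (hinc : ∀ i ∈ S, ∀ j ∈ S, i < j → τ i < τ j)
    (hdec : ∀ i ∉ S, ∀ j ∉ S, i < j → τ j < τ i)
    {x : Fin n} (h : TypeNE τ x) : x ∈ S := by
  obtain ⟨j, k, h1, h2, h3, h4⟩ := h
  by_contra hx
  have hj : j ∈ S := by
    by_contra hj
    exact absurd (hdec j hj x hx (h1.trans h2)) (asymm h4)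
  have hk : k ∈ S := by
    by_contra hk
    exact absurd (hdec k hk x hx h2) (asymm (h3.trans h4))
  exact absurd (hinc j hj k hk h1) (asymm h3)

lemma sm_nw_notMem (hinc : ∀ i ∈ S, ∀ j ∈ S, i < j → τ i < τ j)
    (hdec : ∀ i ∉ S, ∀ j ∉ S, i < j → τ j < τ i)
    {x : Fin n} (h : TypeNW τ x) : x ∉ S := by
  obtain ⟨j, k, h1, h2, h3, h4⟩ := h
  intro hx
  have hj : j ∉ S := fun hj => absurd (hinc x hx j hj h1) (asymm (h3.trans h4))
  have hk : k ∉ S := fun hk => absurd (hinc x hx k hk (h1.trans h2)) (asymm h4)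
  exact absurd (hdec j hj k hk h2) (asymm h3)

lemma sm_se_notMem (hinc : ∀ i ∈ S, ∀ j ∈ S, i < j → τ i < τ j)
    (hdec : ∀ i ∉ S, ∀ j ∉ S, i < j → τ j < τ i)
    {x : Fin n} (h : TypeSE τ x) : x ∉ S := by
  obtain ⟨j, k, h1, h2, h3, h4⟩ := h
  intro hx
  have hj : j ∉ S := fun hj => absurd (hinc j hj x hx (h1.trans h2)) (asymm h3)
  have hk : k ∉ S := fun hk => absurd (hinc k hk x hx h2) (asymm (h3.trans h4))
  exact absurd (hdec j hj k hk h1) (asymm h4)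

lemma sm_sw_ne_disjoint (hinc : ∀ i ∈ S, ∀ j ∈ S, i < j → τ i < τ j)
    (hdec : ∀ i ∉ S, ∀ j ∉ S, i < j → τ j < τ i)
    {x : Fin n} (hsw : TypeSW τ x) (hne : TypeNE τ x) : False := by
  obtain ⟨j', k', a1, a2, a3, a4⟩ := hsw   -- x < j' < k', τx < τk' < τj'
  obtain ⟨j, k, b1, b2, b3, b4⟩ := hne     -- j < k < x, τk < τj < τx
  by_cases hj : j ∈ S
  · have hk : k ∉ S := fun hk => absurd (hinc j hj k hk b1) (asymm b3)
    have hj' : j' ∈ S := by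
      by_contra hj'
      exact absurd (hdec k hk j' hj' (b2.trans a1)) (asymm ((b3.trans b4).trans (a3.trans a4)))
    have hk' : k' ∈ S := by
      by_contra hk'
      exact absurd (hdec k hk k' hk' (b2.trans (a1.trans a2))) (asymm ((b3.trans b4).trans a3))
    exact absurd (hinc j' hj' k' hk' a2) (asymm a4)
  · have hj' : j' ∈ S := by
      by_contra hj'
      exact absurd (hdec j hj j' hj' ((b1.trans b2).trans a1)) (asymm (b4.trans (a3.trans a4)))
    have hk' : k' ∈ S := by
      by_contra hk'
      exact absurd (hdec j hj k' hk' ((b1.trans b2).trans (a1.trans a2))) (asymm (b4.trans a3))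
    exact absurd (hinc j' hj' k' hk' a2) (asymm a4)


variable {n : ℕ} {τ : Equiv.Perm (Fin n)}

private lemma val_lt {x c : Fin n} (hne : x ≠ c) (h : ¬ τ x < τ c) : τ c < τ x :=
  lt_of_le_of_ne (not_lt.1 h) (fun he => hne (τ.injective he).symm)

/-- an SW point is order-compatible with a central point -/
lemma sm_sw_central {x c : Fin n} (hx : TypeSW τ x) (hc : Central τ c) :
    (x < c → τ x < τ c) ∧ (c < x → τ c < τ x) := by
  obtain ⟨j, k, h1, h2, h3, h4⟩ := hx  -- x<j<k, τx<τk<τj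
  constructor
  · intro hxc
    by_contra hlt
    have hcx : τ c < τ x := val_lt hxc.ne hlt
    rcases lt_trichotomy c j with h | h | h
    · exact hc.2.2.1 ⟨j, k, h, h2, hcx.trans h3, h4⟩
    · subst h; exact absurd (hcx.trans (h3.trans h4)) (lt_irrefl _)
    · exact hc.2.2.2 ⟨x, j, h1, h, hcx, h3.trans h4⟩
  · intro hcx
    by_contra hlt
    have hxc : τ x < τ c := val_lt hcx.ne hlt
    rcases lt_trichotomy (τ c) (τ k) with h | h | h
    · exact hc.2.2.1 ⟨j, k, hcx.trans h1, h2, h, h4⟩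
    · exact absurd (τ.injective h) (hcx.trans (h1.trans h2)).ne
    · exact hc.2.1 ⟨x, k, hcx, h1.trans h2, h3, h⟩

/-- an NE point is order-compatible with a central point -/
lemma sm_ne_central {x c : Fin n} (hx : TypeNE τ x) (hc : Central τ c) :
    (x < c → τ x < τ c) ∧ (c < x → τ c < τ x) := by
  obtain ⟨j, k, h1, h2, h3, h4⟩ := hx  -- j<k<x, τk<τj<τx
  constructor
  · intro hxc
    by_contra hlt
    have hcx : τ c < τ x := val_lt hxc.ne hlt
    rcases lt_trichotomy (τ c) (τ j) with h | h | h
    · exact hc.2.2.2 ⟨j, x, h1.trans h2, hxc, h, h4⟩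
    · exact absurd (τ.injective h) ((h1.trans (h2.trans hxc)).ne')
    · exact hc.1 ⟨j, k, h1, h2.trans hxc, h3, h⟩
  · intro hcx
    by_contra hlt
    have hxc : τ x < τ c := val_lt hcx.ne hlt
    rcases lt_trichotomy c k with h | h | h
    · exact hc.2.1 ⟨k, x, h, h2, h3.trans h4, hxc⟩
    · subst h; exact absurd (h3.trans (h4.trans hxc)) (lt_irrefl _)
    · exact hc.1 ⟨j, k, h1, h, h3, h4.trans hxc⟩
  
end Helpers

/-- the maximum size of an increasing set of positions of a skew-merged
permutation equals the number of SW positions plus the number of NE positions plus the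
maximum size of an increasing set of central positions. -/
theorem statement19 {n : ℕ} (τ : Equiv.Perm (Fin n)) (hτ : SkewMerged τ) :
    sSup {m : ℕ | ∃ S : Set (Fin n),
        (∀ i ∈ S, ∀ j ∈ S, i < j → τ i < τ j) ∧ S.ncard = m} =
      {x : Fin n | TypeSW τ x}.ncard + {x : Fin n | TypeNE τ x}.ncard +
        sSup {m : ℕ | ∃ S : Set (Fin n), (∀ i ∈ S, Central τ i) ∧
          (∀ i ∈ S, ∀ j ∈ S, i < j → τ i < τ j) ∧ S.ncard = m} := by
  classical
  obtain ⟨S, hinc, hdec⟩ := hτ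
  set A := {x : Fin n | TypeSW τ x} with hA
  set B := {x : Fin n | TypeNE τ x} with hB
  set Cen := {x : Fin n | Central τ x} with hCen
  set M₁ := {m : ℕ | ∃ T : Set (Fin n),
      (∀ i ∈ T, ∀ j ∈ T, i < j → τ i < τ j) ∧ T.ncard = m} with hM₁
  set M₂ := {m : ℕ | ∃ T : Set (Fin n), (∀ i ∈ T, Central τ i) ∧
      (∀ i ∈ T, ∀ j ∈ T, i < j → τ i < τ j) ∧ T.ncard = m} with hM₂
  have hband : ∀ s : Set (Fin n), s.ncard ≤ n := by
    intro s
    have := Set.ncard_le_ncard (Set.subset_univ s) Set.finite_univ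
    simpa [Set.ncard_univ] using this
  have hbdd1 : BddAbove M₁ := ⟨n, by rintro m ⟨T, _, rfl⟩; exact hband T⟩
  have hbdd2 : BddAbove M₂ := ⟨n, by rintro m ⟨T, _, _, rfl⟩; exact hband T⟩
  have hne1 : M₁.Nonempty := ⟨0, ∅, by simp, Set.ncard_empty _⟩
  have hne2 : M₂.Nonempty := ⟨0, ∅, by simp, by simp, Set.ncard_empty _⟩
  -- disjointness facts
  have hAB : Disjoint A B := by
    rw [Set.disjoint_left]
    intro a ha hb
    exact sm_sw_ne_disjoint hinc hdec ha hb
  have hACen : Disjoint A Cen := by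
    rw [Set.disjoint_left]; intro a ha hb; exact hb.2.2.1 ha
  have hBCen : Disjoint B Cen := by
    rw [Set.disjoint_left]; intro a ha hb; exact hb.1 ha
  apply le_antisymm
  · -- ≤ direction
    obtain ⟨T, hT, hTcard⟩ := Nat.sSup_mem hne1 hbdd1
    rw [← hTcard]
    have hTcen : T ∩ Cen ∈ {s : Set (Fin n) | (∀ i ∈ s, Central τ i) ∧
        (∀ i ∈ s, ∀ j ∈ s, i < j → τ i < τ j)} := by
      constructor
      · intro i hi; exact hi.2
      · intro i hi j hj hij; exact hT i hi.1 j hj.1 hij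
    by_cases hgood : ∀ t ∈ T, t ∈ A ∪ B ∪ Cen
    · -- every point of T is SW, NE or central
      have hsplit : T = (T ∩ A) ∪ ((T ∩ B) ∪ (T ∩ Cen)) := by
        ext t
        constructor
        · intro ht
          rcases hgood t ht with (h | h) | h
          · exact Or.inl ⟨ht, h⟩
          · exact Or.inr (Or.inl ⟨ht, h⟩)
          · exact Or.inr (Or.inr ⟨ht, h⟩)
        · rintro (h | (h | h)) <;> exact h.1
      have hcard : T.ncard = (T ∩ A).ncard + ((T ∩ B).ncard + (T ∩ Cen).ncard) := by
        conv_lhs => rw [hsplit]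
        rw [Set.ncard_union_eq ?d1 (Set.toFinite _) (Set.toFinite _),
          Set.ncard_union_eq ?d2 (Set.toFinite _) (Set.toFinite _)]
        case d1 =>
          refine Set.disjoint_union_right.2 ⟨?_, ?_⟩
          · exact (hAB.mono Set.inter_subset_right Set.inter_subset_right)
          · exact (hACen.mono Set.inter_subset_right Set.inter_subset_right)
        case d2 => exact (hBCen.mono Set.inter_subset_right Set.inter_subset_right)
      rw [hcard]
      have h1 : (T ∩ A).ncard ≤ A.ncard :=
        Set.ncard_le_ncard Set.inter_subset_right (Set.toFinite _)
      have h2 : (T ∩ B).ncard ≤ B.ncard :=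
        Set.ncard_le_ncard Set.inter_subset_right (Set.toFinite _)
      have h3 : (T ∩ Cen).ncard ≤ sSup M₂ :=
        le_csSup hbdd2 ⟨T ∩ Cen, hTcen.1, hTcen.2, rfl⟩
      omega
    · -- T contains a point x which is NW or SE
      push_neg at hgood
      obtain ⟨x, hxT, hxbad⟩ := hgood
      have hxA : x ∉ A := fun h => hxbad (Or.inl (Or.inl h))
      have hxB : x ∉ B := fun h => hxbad (Or.inl (Or.inr h))
      have hxCen : x ∉ Cen := fun h => hxbad (Or.inr h)
      have hxtype : TypeNW τ x ∨ TypeSE τ x := by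
        by_contra h
        push_neg at h
        exact hxCen ⟨hxB, h.1, hxA, h.2⟩
      have hxS : x ∉ S := by
        rcases hxtype with h | h
        · exact sm_nw_notMem hinc hdec h
        · exact sm_se_notMem hinc hdec h
      have hTS : ∀ t ∈ T, t ≠ x → t ∈ S := by
        intro t ht htx
        by_contra htS
        rcases lt_trichotomy t x with h | h | h
        · exact absurd (hT t ht x hxT h) (asymm (hdec t htS x hxS h))
        · exact htx h
        · exact absurd (hT x hxT t ht h) (asymm (hdec x hxS t htS h))
      -- find the witness w
      have hw : ∃ w, w ∈ S ∧ w ∉ T := by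
        rcases hxtype with ⟨j, k, h1, h2, h3, h4⟩ | ⟨j, k, h1, h2, h3, h4⟩
        · -- NW : x<j<k, τj<τk<τx
          by_cases hj : j ∈ S
          · exact ⟨j, hj, fun hjT => asymm (hT x hxT j hjT h1) (h3.trans h4)⟩
          · have hk : k ∈ S := by
              by_contra hk
              exact absurd (hdec j hj k hk h2) (asymm h3)
            exact ⟨k, hk, fun hkT => asymm (hT x hxT k hkT (h1.trans h2)) h4⟩
        · -- SE : j<k<x, τx<τj<τk
          by_cases hj : j ∈ S
          · exact ⟨j, hj, fun hjT => asymm (hT j hjT x hxT (h1.trans h2)) h3⟩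
          · have hk : k ∈ S := by
              by_contra hk
              exact absurd (hdec j hj k hk h1) (asymm h4)
            exact ⟨k, hk, fun hkT => asymm (hT k hkT x hxT h2) (h3.trans h4)⟩
      obtain ⟨w, hwS, hwT⟩ := hw
      have hwtype : TypeSW τ w ∨ TypeNE τ w ∨ Central τ w := by
        by_cases hsw : TypeSW τ w
        · exact Or.inl hsw
        by_cases hne : TypeNE τ w
        · exact Or.inr (Or.inl hne)
        refine Or.inr (Or.inr ⟨hne, ?_, hsw, ?_⟩)
        · exact fun h => sm_nw_notMem hinc hdec h hwS
        · exact fun h => sm_se_notMem hinc hdec h hwS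
      -- counting split with x
      have hsplit : T = insert x ((T ∩ A) ∪ ((T ∩ B) ∪ (T ∩ Cen))) := by
        ext t
        constructor
        · intro ht
          by_cases htx : t = x
          · exact Or.inl htx
          · have htS := hTS t ht htx
            refine Or.inr ?_
            by_cases hsw : TypeSW τ t
            · exact Or.inl ⟨ht, hsw⟩
            by_cases hne : TypeNE τ t
            · exact Or.inr (Or.inl ⟨ht, hne⟩)
            refine Or.inr (Or.inr ⟨ht, ⟨hne, ?_, hsw, ?_⟩⟩)
            · exact fun h => sm_nw_notMem hinc hdec h htS
            · exact fun h => sm_se_notMem hinc hdec h htS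
        · rintro (h | (h | (h | h)))
          · exact h ▸ hxT
          · exact h.1
          · exact h.1
          · exact h.1
      have hxnot : x ∉ (T ∩ A) ∪ ((T ∩ B) ∪ (T ∩ Cen)) := by
        rintro (h | (h | h))
        · exact hxA h.2
        · exact hxB h.2
        · exact hxCen h.2
      have hcard : T.ncard = (T ∩ A).ncard + ((T ∩ B).ncard + (T ∩ Cen).ncard) + 1 := by
        conv_lhs => rw [hsplit]
        rw [Set.ncard_insert_of_notMem hxnot (Set.toFinite _),
          Set.ncard_union_eq ?d1 (Set.toFinite _) (Set.toFinite _),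
          Set.ncard_union_eq ?d2 (Set.toFinite _) (Set.toFinite _)]
        case d1 =>
          refine Set.disjoint_union_right.2 ⟨?_, ?_⟩
          · exact (hAB.mono Set.inter_subset_right Set.inter_subset_right)
          · exact (hACen.mono Set.inter_subset_right Set.inter_subset_right)
        case d2 => exact (hBCen.mono Set.inter_subset_right Set.inter_subset_right)
      rw [hcard]
      have h2' : (T ∩ B).ncard ≤ B.ncard :=
        Set.ncard_le_ncard Set.inter_subset_right (Set.toFinite _)
      have h1' : (T ∩ A).ncard ≤ A.ncard :=
        Set.ncard_le_ncard Set.inter_subset_right (Set.toFinite _)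
      have h3' : (T ∩ Cen).ncard ≤ sSup M₂ :=
        le_csSup hbdd2 ⟨T ∩ Cen, hTcen.1, hTcen.2, rfl⟩
      rcases hwtype with hsw | hne | hcen
      · -- w is SW : absorb the +1 into A.ncard
        have : (T ∩ A).ncard + 1 ≤ A.ncard := by
          have hins : (insert w (T ∩ A)).ncard = (T ∩ A).ncard + 1 :=
            Set.ncard_insert_of_notMem (fun h => hwT h.1) (Set.toFinite _)
          have hsub : insert w (T ∩ A) ⊆ A := by
            intro t ht
            rcases Set.mem_insert_iff.1 ht with h | h
            · exact h ▸ hsw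
            · exact h.2
          have := Set.ncard_le_ncard hsub (Set.toFinite _)
          omega
        omega
      · have : (T ∩ B).ncard + 1 ≤ B.ncard := by
          have hins : (insert w (T ∩ B)).ncard = (T ∩ B).ncard + 1 :=
            Set.ncard_insert_of_notMem (fun h => hwT h.1) (Set.toFinite _)
          have hsub : insert w (T ∩ B) ⊆ B := by
            intro t ht
            rcases Set.mem_insert_iff.1 ht with h | h
            · exact h ▸ hne
            · exact h.2
          have := Set.ncard_le_ncard hsub (Set.toFinite _)
          omega
        omega
      · -- w central : add it to the central increasing set
        have : (T ∩ Cen).ncard + 1 ≤ sSup M₂ := by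
          have hins : (insert w (T ∩ Cen)).ncard = (T ∩ Cen).ncard + 1 :=
            Set.ncard_insert_of_notMem (fun h => hwT h.1) (Set.toFinite _)
          have hsubS : ∀ t ∈ insert w (T ∩ Cen), t ∈ S := by
            intro t ht
            rcases Set.mem_insert_iff.1 ht with h | h
            · exact h ▸ hwS
            · exact hTS t h.1 (fun he => hxCen (he ▸ h.2))
          refine le_csSup hbdd2 ⟨insert w (T ∩ Cen), ?_, ?_, hins⟩
          · intro i hi
            rcases Set.mem_insert_iff.1 hi with h | h
            · exact h ▸ hcen
            · exact h.2
          · intro i hi j hj hij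
            exact hinc i (hsubS i hi) j (hsubS j hj) hij
        omega
  · -- ≥ direction
    obtain ⟨C, hCcen, hCinc, hCcard⟩ := Nat.sSup_mem hne2 hbdd2
    rw [← hCcard]
    have hCA : Disjoint A C := by
      rw [Set.disjoint_left]; intro a ha hc; exact (hCcen a hc).2.2.1 ha
    have hCB : Disjoint B C := by
      rw [Set.disjoint_left]; intro a ha hc; exact (hCcen a hc).1 ha
    have hUinc : ∀ i ∈ A ∪ (B ∪ C), ∀ j ∈ A ∪ (B ∪ C), i < j → τ i < τ j := by
      have memS : ∀ t, t ∈ A ∪ B → t ∈ S := by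
        rintro t (h | h)
        · exact sm_sw_mem hinc hdec h
        · exact sm_ne_mem hinc hdec h
      rintro i (hi | (hi | hi)) j (hj | (hj | hj)) hij
      · exact hinc i (memS i (Or.inl hi)) j (memS j (Or.inl hj)) hij
      · exact hinc i (memS i (Or.inl hi)) j (memS j (Or.inr hj)) hij
      · exact (sm_sw_central hi (hCcen j hj)).1 hij
      · exact hinc i (memS i (Or.inr hi)) j (memS j (Or.inl hj)) hij
      · exact hinc i (memS i (Or.inr hi)) j (memS j (Or.inr hj)) hij
      · exact (sm_ne_central hi (hCcen j hj)).1 hij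
      · exact (sm_sw_central hj (hCcen i hi)).2 hij
      · exact (sm_ne_central hj (hCcen i hi)).2 hij
      · exact hCinc i hi j hj hij
    have hUcard : (A ∪ (B ∪ C)).ncard = A.ncard + B.ncard + C.ncard := by
      rw [Set.ncard_union_eq ?d1 (Set.toFinite _) (Set.toFinite _),
        Set.ncard_union_eq hCB (Set.toFinite _) (Set.toFinite _), add_assoc]
      case d1 => exact Set.disjoint_union_right.2 ⟨hAB, hCA⟩
    exact le_csSup hbdd1 ⟨A ∪ (B ∪ C), hUinc, hUcard⟩
end
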